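/- arXiv:1002.0182 — 8 statements merged into one kernel-verified Lean document; each statement's English description precedes it below -/
import Mathlib

section
/- Let D be the m×m lower bidiagonal matrix with 1's on the diagonal and -1's on the subdiagonal. Then the singular values of D are σ_j(D) = 2 cos(π j / (2m+1)) for j = 1, …, m (in descending order). -/
/-!
Dᴴ D is the second-difference matrix, with a free end in the last row. Take α = π j / (2m+1) and
θ = π - 2α. The vector (sin (k θ))ₖ, for k = 1, …, m, is an eigenvector of Dᴴ D with eigenvalue
2 - 2 cos θ = (2 cos α)²: the interior rows reduce to
sin ((k-1)θ) + sin ((k+1)θ) = 2 cos θ sin (k θ), the first row to sin 0 = 0, and the last row to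
sin ((m+1)θ) = sin (m θ), which holds because (2m+1)θ is an odd multiple of π. These m eigenvalues
are distinct, so they make up the whole spectrum, and sorting their square roots 2 cos α in
decreasing order gives the singular values.
-/

open Matrix Real

/-- The m×m first-order difference matrix: 1's on the diagonal, -1's on the subdiagonal. -/
noncomputable def Dmat (m : ℕ) : Matrix (Fin m) (Fin m) ℝ :=
  Matrix.of fun i j => if (i : ℕ) = (j : ℕ) then 1 else if (i : ℕ) = (j : ℕ) + 1 then -1 else 0

/-- `σ` is the sequence of singular values of `A` listed in descending order:
it is antitone and is a rearrangement of the square roots of the eigenvalues of `Aᴴ * A`. -/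
noncomputable def IsDescSV {m k : ℕ} (A : Matrix (Fin m) (Fin k) ℝ) (σ : Fin k → ℝ) : Prop :=
  Antitone σ ∧ ∃ e : Equiv.Perm (Fin k),
    ∀ i, σ (e i) = Real.sqrt ((Matrix.isHermitian_conjTranspose_mul_self A).eigenvalues i)

theorem Antitone.eq_of_range_eq {ι α : Type*} [LinearOrder ι] [Finite ι] [PartialOrder α]
    {f g : ι → α} (hf : Antitone f) (hg : StrictAnti g) (h : Set.range f = Set.range g) :
    f = g := by
  have hcard : Nat.card ι ≤ Nat.card (Set.range f) := by
    rw [h, Nat.card_range_of_injective hg.injective]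
  have hinj : Function.Injective f := fun a b hab =>
    (Set.rangeFactorization_surjective.bijective_of_nat_card_le hcard).injective (Subtype.ext hab)
  exact ((hf.strictAnti_of_injective hinj).range_inj hg).1 h

theorem Matrix.mem_spectrum_of_mulVec_eq_smul {n R : Type*} [Fintype n] [DecidableEq n]
    [CommRing R] {A : Matrix n n R} {v : n → R} {μ : R} (hv : v ≠ 0) (h : A *ᵥ v = μ • v) :
    μ ∈ spectrum R A := by
  rw [← spectrum_toLin']
  refine (Module.End.hasEigenvalue_of_hasEigenvector ⟨?_, hv⟩).mem_spectrum
  rwa [Module.End.mem_eigenspace_iff, toLin'_apply]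

theorem Real.sin_sub_add_sin_add (x θ : ℝ) : sin (x - θ) + sin (x + θ) = 2 * cos θ * sin x := by
  rw [sin_sub, sin_add]; ring

theorem Dmat_mulVec_succ {m : ℕ} (s : ℕ → ℝ) (hs : s 0 = 0) :
    Dmat m *ᵥ (fun i : Fin m => s ((i : ℕ) + 1)) = fun i : Fin m => s ((i : ℕ) + 1) - s i := by
  funext i
  have hi := i.isLt
  have hsummand : ∀ j : ℕ,
      (if (i : ℕ) = j then 1 else if (i : ℕ) = j + 1 then -1 else 0) * s (j + 1) =
        (if j = i then s (j + 1) else 0) - (if j + 1 = i then s (j + 1) else 0) := by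
    intro j; split_ifs <;> first | omega | ring
  have hshift := Finset.sum_range_succ' (fun j => if j = (i : ℕ) then s j else 0) m
  simp only [hs, ite_self, add_zero] at hshift
  simp only [mulVec, dotProduct, Dmat, of_apply]
  rw [Fin.sum_univ_eq_sum_range
      (fun j => (if (i : ℕ) = j then 1 else if (i : ℕ) = j + 1 then -1 else 0) * s (j + 1)),
    Finset.sum_congr rfl fun j _ => hsummand j, Finset.sum_sub_distrib, ← hshift,
    Finset.sum_ite_eq', Finset.sum_ite_eq']
  simp [hi, hi.trans (Nat.lt_succ_self m)]

theorem Dmat_transpose_mulVec {m : ℕ} (t : ℕ → ℝ) (ht : t m = 0) :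
    (Dmat m)ᵀ *ᵥ (fun i : Fin m => t i) = fun i : Fin m => t i - t ((i : ℕ) + 1) := by
  funext i
  have hi := i.isLt
  have hsummand : ∀ j : ℕ, (if j = (i : ℕ) then 1 else if j = (i : ℕ) + 1 then -1 else 0) * t j
      = (if j = i then t j else 0) - (if j = i + 1 then t j else 0) := by
    intro j; split_ifs <;> first | omega | ring
  simp only [mulVec, dotProduct, Dmat, transpose_apply, of_apply]
  rw [Fin.sum_univ_eq_sum_range
      (fun j => (if j = (i : ℕ) then 1 else if j = (i : ℕ) + 1 then -1 else 0) * t j),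
    Finset.sum_congr rfl fun j _ => hsummand j, Finset.sum_sub_distrib,
    Finset.sum_ite_eq', Finset.sum_ite_eq']
  rcases (Nat.succ_le_of_lt hi).lt_or_eq with h | h
  · simp [hi, h]
  · simp [hi, show (i : ℕ) + 1 = m from h, ht]

theorem Dmat_gram_mulVec_succ {m : ℕ} (s : ℕ → ℝ) (h0 : s 0 = 0) (hm : s (m + 1) = s m) :
    ((Dmat m)ᴴ * Dmat m) *ᵥ (fun i : Fin m => s ((i : ℕ) + 1)) =
      fun i : Fin m => 2 * s ((i : ℕ) + 1) - s i - s ((i : ℕ) + 2) := by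
  rw [conjTranspose_eq_transpose_of_trivial, ← mulVec_mulVec, Dmat_mulVec_succ s h0,
    Dmat_transpose_mulVec (fun n => s (n + 1) - s n) (by simp [hm])]
  funext i
  ring

theorem two_sub_two_cos_mem_spectrum_Dmat_gram {m : ℕ} (hm : 0 < m) {θ : ℝ} (hθ : sin θ ≠ 0)
    (hbd : sin ((m + 1) * θ) = sin (m * θ)) :
    2 - 2 * cos θ ∈ spectrum ℝ ((Dmat m)ᴴ * Dmat m) := by
  set s : ℕ → ℝ := fun n => sin (n * θ) with hs
  have hrec : ∀ n : ℕ, 2 * s (n + 1) - s n - s (n + 2) = (2 - 2 * cos θ) * s (n + 1) := by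
    intro n
    have := sin_sub_add_sin_add ((n + 1) * θ) θ
    simp only [hs]; push_cast
    rw [show (n : ℝ) * θ = (n + 1) * θ - θ by ring,
      show ((n : ℝ) + 2) * θ = (n + 1) * θ + θ by ring]
    linarith
  refine Matrix.mem_spectrum_of_mulVec_eq_smul (v := fun i : Fin m => s ((i : ℕ) + 1))
    (fun hv => hθ (by simpa [hs] using congrFun hv ⟨0, hm⟩)) ?_
  rw [Dmat_gram_mulVec_succ s (by simp [hs]) (by simpa [hs] using hbd)]
  funext i
  simp only [hrec, Pi.smul_apply, smul_eq_mul]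

noncomputable def singularAngle (m : ℕ) (j : Fin m) : ℝ := π * ((j : ℕ) + 1) / (2 * m + 1)

theorem singularAngle_pos {m : ℕ} (j : Fin m) : 0 < singularAngle m j := by
  unfold singularAngle; positivity

theorem singularAngle_lt_pi_div_two {m : ℕ} (j : Fin m) : singularAngle m j < π / 2 := by
  have hj : ((j : ℕ) : ℝ) + 1 ≤ m := by exact_mod_cast j.isLt
  rw [singularAngle, div_lt_div_iff₀ (by positivity) two_pos]
  nlinarith [pi_pos]

theorem singularAngle_strictMono (m : ℕ) : StrictMono (singularAngle m) := fun i j hij => by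
  have hij' : ((i : ℕ) : ℝ) < (j : ℕ) := by exact_mod_cast hij
  unfold singularAngle
  gcongr

theorem cos_singularAngle_pos {m : ℕ} (j : Fin m) : 0 < cos (singularAngle m j) :=
  cos_pos_of_mem_Ioo ⟨by linarith [singularAngle_pos j, pi_pos], singularAngle_lt_pi_div_two j⟩

theorem strictAnti_cos_singularAngle (m : ℕ) : StrictAnti fun j => cos (singularAngle m j) :=
  fun i j hij => strictAntiOn_cos
    ⟨(singularAngle_pos i).le, by linarith [singularAngle_lt_pi_div_two i, pi_pos]⟩
    ⟨(singularAngle_pos j).le, by linarith [singularAngle_lt_pi_div_two j, pi_pos]⟩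
    (singularAngle_strictMono m hij)

theorem two_cos_singularAngle_sq_mem_spectrum {m : ℕ} (j : Fin m) :
    (2 * cos (singularAngle m j)) ^ 2 ∈ spectrum ℝ ((Dmat m)ᴴ * Dmat m) := by
  set α := singularAngle m j with hα
  have hmα : (2 * m + 1) * α = π * ((j : ℕ) + 1) := by
    rw [hα, singularAngle]; field_simp
  have hsin : sin (π - 2 * α) ≠ 0 := by
    rw [sin_pi_sub]
    exact (sin_pos_of_pos_of_lt_pi (by linarith [singularAngle_pos j])
      (by linarith [singularAngle_lt_pi_div_two j])).ne'
  have hbd : sin ((m + 1) * (π - 2 * α)) = sin (m * (π - 2 * α)) := by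
    have : (m + 1) * (π - 2 * α) = (π - m * (π - 2 * α)) + ((m - j - 1 : ℤ) : ℝ) * (2 * π) := by
      push_cast; linarith
    rw [this, sin_add_int_mul_two_pi, sin_pi_sub]
  convert two_sub_two_cos_mem_spectrum_Dmat_gram (Fin.pos j) hsin hbd using 1
  rw [cos_pi_sub, cos_two_mul]
  ring

theorem range_eigenvalues_Dmat_gram (m : ℕ) :
    Set.range (isHermitian_conjTranspose_mul_self (Dmat m)).eigenvalues =
      Set.range fun j => (2 * cos (singularAngle m j)) ^ 2 := by
  have hinj : Function.Injective fun j => (2 * cos (singularAngle m j)) ^ 2 := fun i j hij =>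
    (strictAnti_cos_singularAngle m).injective <| by
      nlinarith [cos_singularAngle_pos i, cos_singularAngle_pos j]
  symm
  refine Set.eq_of_subset_of_ncard_le ?_ ?_
  · rintro _ ⟨j, rfl⟩
    rw [← IsHermitian.spectrum_real_eq_range_eigenvalues]
    exact two_cos_singularAngle_sq_mem_spectrum j
  · rw [Set.ncard_range_of_injective hinj, ← Nat.card_coe_set_eq]
    exact Finite.card_range_le _

theorem singular_values_of_difference_matrix_general (m : ℕ)
    (σ : Fin m → ℝ) (hσ : IsDescSV (Dmat m) σ) :
    ∀ j : Fin m, σ j = 2 * Real.cos (Real.pi * ((j : ℕ) + 1) / (2 * m + 1)) := by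
  obtain ⟨hanti, e, he⟩ := hσ
  have hrange : Set.range σ = Set.range fun j => 2 * cos (singularAngle m j) := calc
    Set.range σ = Set.range (σ ∘ e) := (e.surjective.range_comp σ).symm
    _ = sqrt '' Set.range (isHermitian_conjTranspose_mul_self (Dmat m)).eigenvalues := by
      rw [← Set.range_comp]; exact congrArg Set.range (funext he)
    _ = Set.range fun j => 2 * cos (singularAngle m j) := by
      rw [range_eigenvalues_Dmat_gram, ← Set.range_comp]
      congr 1
      funext j
      exact sqrt_sq (by linarith [cos_singularAngle_pos j])
  have hsa : StrictAnti fun j => 2 * cos (singularAngle m j) := fun i j hij => by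
    linarith [strictAnti_cos_singularAngle m hij]
  exact congrFun (hanti.eq_of_range_eq hsa hrange)

/-- The singular values of the difference matrix `D` are
`σ_j(D) = 2 cos(π j / (2m+1))`, `j = 1, …, m`, in descending order. -/
theorem singular_values_of_difference_matrix (m : ℕ) (hm : 0 < m)
    (σ : Fin m → ℝ) (hσ : IsDescSV (Dmat m) σ) :
    ∀ j : Fin m, σ j = 2 * Real.cos (Real.pi * ((j : ℕ) + 1) / (2 * m + 1)) :=
  singular_values_of_difference_matrix_general m σ hσ
end

section
/- Let D be the m×m difference matrix and r a positive integer with m ≥ 2r. Define C^{(r)} = (D*)^r D^r − (D* D)^r. Then C^{(r)}_{ij} = 0 whenever (i,j) lies outside the union of the two corner blocks {1,…,r}×{1,…,r} and {m−r+1,…,m}×{m−r+1,…,m}. In particular, rank(C^{(r)}) ≤ 2r. -/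
open Matrix Real

/-!
Write `D = 1 - N` with `N` the subdiagonal shift. Then `[Dᵀ, D] = NᵀN - NNᵀ` has only the two
diagonal corner entries, and the recursions
`[Dᵀ, D^(k+1)] = [Dᵀ, D^k] D + D^k [Dᵀ, D]` and
`(Dᵀ)^(r+1) D^(r+1) - (DᵀD)^(r+1) = (Dᵀ)^r [Dᵀ, D^r] D + ((Dᵀ)^r D^r - (DᵀD)^r) DᵀD`
propagate supports: since `D` is lower bidiagonal, each factor moves an entry by at most one
row or column, so `[Dᵀ, D^k]` lives in the first column and last row, and `C^{(r)}` in the two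
`r × r` corners. Its nonzero rows are then among `2r` indices, which bounds the rank.
-/

namespace Matrix

variable {ι κ ν α : Type*}

def SupportedOn [Zero α] (M : Matrix ι κ α) (R : ι → κ → Prop) : Prop :=
  ∀ i j, M i j ≠ 0 → R i j

namespace SupportedOn

variable {M : Matrix ι κ α} {R S : ι → κ → Prop}

theorem mono [Zero α] (hM : M.SupportedOn R) (hRS : ∀ i j, R i j → S i j) : M.SupportedOn S :=
  fun i j h => hRS i j (hM i j h)

theorem add [AddZeroClass α] {N : Matrix ι κ α} (hM : M.SupportedOn R) (hN : N.SupportedOn S) :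
    (M + N).SupportedOn fun i j => R i j ∨ S i j := by
  intro i j h
  by_contra! hc
  exact h (by rw [add_apply, not_imp_comm.1 (hM i j) hc.1, not_imp_comm.1 (hN i j) hc.2, add_zero])

theorem mul [Fintype κ] [NonUnitalNonAssocSemiring α] {N : Matrix κ ν α}
    {T : κ → ν → Prop} (hM : M.SupportedOn R) (hN : N.SupportedOn T) :
    (M * N).SupportedOn (Relation.Comp R T) := by
  intro i j h
  obtain ⟨l, -, hl⟩ := Finset.exists_ne_zero_of_sum_ne_zero h
  exact ⟨l, hM i l (left_ne_zero_of_mul hl), hN l j (right_ne_zero_of_mul hl)⟩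

theorem pow_band {m : ℕ} [Semiring α] {M : Matrix (Fin m) (Fin m) α} {a b : ℤ}
    (hM : M.SupportedOn fun i j => a ≤ (j : ℤ) - i ∧ (j : ℤ) - i ≤ b) (k : ℕ) :
    (M ^ k).SupportedOn fun i j => k * a ≤ (j : ℤ) - i ∧ (j : ℤ) - i ≤ k * b := by
  induction k with
  | zero =>
    intro i j h
    rw [pow_zero, one_apply] at h
    split_ifs at h with hij
    · simp [hij]
    · exact absurd rfl h
  | succ k ih =>
    rw [pow_succ]
    refine (ih.mul hM).mono ?_
    rintro i j ⟨l, ⟨h1, h2⟩, h3, h4⟩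
    push_cast
    constructor <;> linarith

theorem transpose [Zero α] (hM : M.SupportedOn R) : Mᵀ.SupportedOn fun i j => R j i :=
  fun i j h => hM j i h

end SupportedOn

theorem rank_le_card_of_supportedOn_rows [Fintype κ] [CommSemiring α] [StrongRankCondition α]
    (M : Matrix ι κ α) (s : Finset ι) (hM : M.SupportedOn fun i _ => i ∈ s) :
    M.rank ≤ s.card := by
  refine M.rank_le_card_of_support_subset s fun i hi => ?_
  obtain ⟨j, hj⟩ := Function.ne_iff.1 hi
  exact hM i j hj

end Matrix

noncomputable def shiftMat (m : ℕ) : Matrix (Fin m) (Fin m) ℝ :=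
  Matrix.of fun i j => if (i : ℕ) = (j : ℕ) + 1 then 1 else 0

theorem Dmat_eq_one_sub_shiftMat (m : ℕ) : Dmat m = 1 - shiftMat m := by
  ext i j
  simp only [Dmat, shiftMat, of_apply, Matrix.sub_apply, one_apply, Fin.ext_iff]
  split_ifs <;> (try omega) <;> norm_num

theorem transpose_shiftMat_mul_shiftMat_apply (m : ℕ) (i j : Fin m) :
    ((shiftMat m)ᵀ * shiftMat m) i j = if (i : ℕ) = j ∧ (i : ℕ) + 1 < m then 1 else 0 := by
  simp only [mul_apply, transpose_apply, shiftMat, of_apply, mul_ite, mul_one, mul_zero]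
  rw [Fin.sum_univ_eq_sum_range
      (fun l => if l = (j : ℕ) + 1 then if l = (i : ℕ) + 1 then (1 : ℝ) else 0 else 0),
    Finset.sum_ite_eq']
  simp only [Finset.mem_range]
  split_ifs <;> first | rfl | omega

theorem shiftMat_mul_transpose_shiftMat_apply (m : ℕ) (i j : Fin m) :
    (shiftMat m * (shiftMat m)ᵀ) i j = if (i : ℕ) = j ∧ 0 < (i : ℕ) then 1 else 0 := by
  simp only [mul_apply, transpose_apply, shiftMat, of_apply, mul_ite, mul_one, mul_zero]
  rw [Fin.sum_univ_eq_sum_range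
      (fun l => if (j : ℕ) = l + 1 then if (i : ℕ) = l + 1 then (1 : ℝ) else 0 else 0),
    eq_sub_of_add_eq (Finset.sum_range_succ'
      (fun k => if (j : ℕ) = k then if (i : ℕ) = k then (1 : ℝ) else 0 else 0) m).symm,
    Finset.sum_ite_eq]
  simp only [Finset.mem_range]
  split_ifs <;> first | omega | norm_num

theorem Dmat_supportedOn (m : ℕ) :
    (Dmat m).SupportedOn fun i j => -1 ≤ (j : ℤ) - i ∧ (j : ℤ) - i ≤ 0 := by
  intro i j h
  simp only [Dmat, of_apply] at h
  split_ifs at h <;> first | omega | exact absurd rfl h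

theorem transpose_Dmat_supportedOn (m : ℕ) :
    (Dmat m)ᵀ.SupportedOn fun i j => 0 ≤ (j : ℤ) - i ∧ (j : ℤ) - i ≤ 1 :=
  ((Dmat_supportedOn m).mono fun _ _ h => by omega).transpose

theorem commutator_Dmat_supportedOn (m : ℕ) :
    ((Dmat m)ᵀ * Dmat m - Dmat m * (Dmat m)ᵀ).SupportedOn fun i j =>
      (i : ℕ) = 0 ∧ (j : ℕ) = 0 ∨ (i : ℕ) = m - 1 ∧ (j : ℕ) = m - 1 := by
  have h : (Dmat m)ᵀ * Dmat m - Dmat m * (Dmat m)ᵀ =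
      (shiftMat m)ᵀ * shiftMat m - shiftMat m * (shiftMat m)ᵀ := by
    rw [Dmat_eq_one_sub_shiftMat, transpose_sub, transpose_one]
    noncomm_ring
  intro i j hij
  rw [h, Matrix.sub_apply, transpose_shiftMat_mul_shiftMat_apply,
    shiftMat_mul_transpose_shiftMat_apply] at hij
  have := i.isLt
  split_ifs at hij <;> first | omega | exact absurd (by norm_num) hij

theorem commutator_Dmat_pow_supportedOn (m k : ℕ) :
    ((Dmat m)ᵀ * Dmat m ^ k - Dmat m ^ k * (Dmat m)ᵀ).SupportedOn fun i j =>
      (i : ℕ) < k ∧ (j : ℕ) = 0 ∨ (i : ℕ) = m - 1 ∧ m - k ≤ (j : ℕ) := by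
  induction k with
  | zero => intro i j h; simp at h
  | succ k ih =>
    have h : (Dmat m)ᵀ * Dmat m ^ (k + 1) - Dmat m ^ (k + 1) * (Dmat m)ᵀ =
        ((Dmat m)ᵀ * Dmat m ^ k - Dmat m ^ k * (Dmat m)ᵀ) * Dmat m +
          Dmat m ^ k * ((Dmat m)ᵀ * Dmat m - Dmat m * (Dmat m)ᵀ) := by
      rw [pow_succ]; noncomm_ring
    rw [h]
    refine ((ih.mul (Dmat_supportedOn m)).add
      (((Dmat_supportedOn m).pow_band k).mul (commutator_Dmat_supportedOn m))).mono ?_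
    rintro i j (⟨l, h1, h2⟩ | ⟨l, h1, h2⟩) <;> have := i.isLt <;> omega

theorem corner_supportedOn (m r : ℕ) :
    ((Dmat m)ᵀ ^ r * Dmat m ^ r - ((Dmat m)ᵀ * Dmat m) ^ r).SupportedOn fun i j =>
      (i : ℕ) < r ∧ (j : ℕ) < r ∨ m - r ≤ (i : ℕ) ∧ m - r ≤ (j : ℕ) := by
  induction r with
  | zero => intro i j h; simp at h
  | succ r ih =>
    have h : (Dmat m)ᵀ ^ (r + 1) * Dmat m ^ (r + 1) - ((Dmat m)ᵀ * Dmat m) ^ (r + 1) =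
        (Dmat m)ᵀ ^ r * ((Dmat m)ᵀ * Dmat m ^ r - Dmat m ^ r * (Dmat m)ᵀ) * Dmat m +
          ((Dmat m)ᵀ ^ r * Dmat m ^ r - ((Dmat m)ᵀ * Dmat m) ^ r) * ((Dmat m)ᵀ * Dmat m) := by
      rw [pow_succ, pow_succ, pow_succ]; noncomm_ring
    rw [h]
    refine (((((transpose_Dmat_supportedOn m).pow_band r).mul
      (commutator_Dmat_pow_supportedOn m r)).mul (Dmat_supportedOn m)).add
      (ih.mul ((transpose_Dmat_supportedOn m).mul (Dmat_supportedOn m)))).mono ?_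
    rintro i j (⟨b, ⟨a, h1, h2⟩, h3⟩ | ⟨l, h1, a, h2, h3⟩) <;>
      have := i.isLt <;> have := j.isLt <;> omega

open Finset in
theorem Fin.card_filter_val_lt_or_sub_le_val (m r : ℕ) :
    #{i : Fin m | (i : ℕ) < r ∨ m - r ≤ (i : ℕ)} ≤ 2 * r := by
  rw [filter_or, two_mul]
  refine (card_union_le _ _).trans (add_le_add ?_ ?_)
  · rw [Fin.card_filter_val_lt]; exact min_le_right _ _
  · calc #{i : Fin m | m - r ≤ (i : ℕ)} = #{i : Fin m | (i : ℕ) < r} := by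
          refine card_bij (fun i _ => i.rev) ?_ (fun _ _ _ _ h => Fin.rev_injective h) ?_
          · intro i; simp only [mem_filter, mem_univ, true_and, Fin.val_rev]; omega
          · intro i hi
            simp only [mem_filter, mem_univ, true_and] at hi
            exact ⟨i.rev, by simp only [mem_filter, mem_univ, true_and, Fin.val_rev]; omega,
              Fin.rev_rev i⟩
      _ ≤ r := by rw [Fin.card_filter_val_lt]; exact min_le_right _ _

theorem corner_structure_of_Cr_general (m r : ℕ) :
    (∀ i j : Fin m,
      ¬ (((i : ℕ) < r ∧ (j : ℕ) < r) ∨ (m - r ≤ (i : ℕ) ∧ m - r ≤ (j : ℕ))) →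
      (((Dmat m)ᵀ ^ r * (Dmat m) ^ r - ((Dmat m)ᵀ * Dmat m) ^ r)) i j = 0) ∧
    ((Dmat m)ᵀ ^ r * (Dmat m) ^ r - ((Dmat m)ᵀ * Dmat m) ^ r).rank ≤ 2 * r := by
  have hC := corner_supportedOn m r
  refine ⟨fun i j => not_imp_comm.1 (hC i j), ?_⟩
  refine (rank_le_card_of_supportedOn_rows _ _ (hC.mono ?_)).trans
    (Fin.card_filter_val_lt_or_sub_le_val m r)
  intro i j h
  simp only [Finset.mem_filter, Finset.mem_univ, true_and]
  omega

/-- `C^{(r)} = (D*)^r D^r − (D* D)^r` vanishes outside the two `r × r` corner blocks,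
and hence has rank at most `2r`. -/
theorem corner_structure_of_Cr (m r : ℕ) (hr : 0 < r) (hm : 2 * r ≤ m) :
    (∀ i j : Fin m,
      ¬ (((i : ℕ) < r ∧ (j : ℕ) < r) ∨ (m - r ≤ (i : ℕ) ∧ m - r ≤ (j : ℕ))) →
      (((Dmat m)ᵀ ^ r * (Dmat m) ^ r - ((Dmat m)ᵀ * Dmat m) ^ r)) i j = 0) ∧
    ((Dmat m)ᵀ ^ r * (Dmat m) ^ r - ((Dmat m)ᵀ * Dmat m) ^ r).rank ≤ 2 * r :=
  corner_structure_of_Cr_general m r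
end

section
/- Let D be the m×m difference matrix, r a positive integer with m ≥ 2r. Then for j = 1, …, m, σ_{min(j+2r, m)}(D)^r ≤ σ_j(D^r) ≤ σ_{max(j−2r, 1)}(D)^r, where σ_j denotes the j-th largest singular value. -/
/-!
Write `A = DᴴD`. Then `(Dʳ)ᴴDʳ = Aʳ + C` with `C = (Dᴴ)ʳDʳ - Aʳ`. The matrices `DᴴD` and `DDᴴ`
differ only in their two corner entries, so every row of `C` with index in `[r, m - r)` vanishes
and `C` has rank at most `2r`. The quadratic forms of `(Dʳ)ᴴDʳ` and `Aʳ` therefore agree on a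
subspace of codimension at most `2r`, and a Courant–Fischer dimension count shifts eigenvalues by
at most `2r` in either direction. The indices clipped at the ends are covered by
`σ₁(Dʳ) ≤ σ₁(D)ʳ` and `σₘ(Dʳ) ≥ σₘ(D)ʳ`, which follow from `σₘ(D)‖x‖ ≤ ‖Dx‖ ≤ σ₁(D)‖x‖`.
-/

open Matrix Real

open Module Finset
open scoped RealInnerProductSpace

section Eigenbasis

variable {E : Type*} [NormedAddCommGroup E] [InnerProductSpace ℝ E] {n : ℕ}
  {T : E →L[ℝ] E} {b : OrthonormalBasis (Fin n) ℝ E} {μ : Fin n → ℝ}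

lemma inner_apply_self_eq_sum (hb : ∀ i, T (b i) = μ i • b i) (x : E) :
    ⟪x, T x⟫ = ∑ i, μ i * ⟪b i, x⟫ ^ 2 := by
  have hTx : T x = ∑ i, (μ i * ⟪b i, x⟫) • b i := by
    conv_lhs => rw [← b.sum_repr' x]
    simp only [map_sum, map_smul, hb, smul_smul, mul_comm]
  simp only [hTx, inner_sum, inner_smul_right, real_inner_comm x, mul_assoc, sq]

lemma inner_apply_self_le (hb : ∀ i, T (b i) = μ i • b i) (hμ : Antitone μ) {i : Fin n}
    {x : E} (hx : ∀ l < i, ⟪b l, x⟫ = 0) : ⟪x, T x⟫ ≤ μ i * ‖x‖ ^ 2 := by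
  rw [inner_apply_self_eq_sum hb, ← b.sum_sq_inner_right, mul_sum]
  refine sum_le_sum fun l _ => ?_
  by_cases hl : l < i
  · simp [hx l hl]
  · exact mul_le_mul_of_nonneg_right (hμ (not_lt.1 hl)) (sq_nonneg _)

lemma le_inner_apply_self (hb : ∀ i, T (b i) = μ i • b i) (hμ : Antitone μ) {i : Fin n}
    {x : E} (hx : ∀ l, i < l → ⟪b l, x⟫ = 0) : μ i * ‖x‖ ^ 2 ≤ ⟪x, T x⟫ := by
  rw [inner_apply_self_eq_sum hb, ← b.sum_sq_inner_right, mul_sum]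
  refine sum_le_sum fun l _ => ?_
  by_cases hl : i < l
  · simp [hx l hl]
  · exact mul_le_mul_of_nonneg_right (hμ (not_lt.1 hl)) (sq_nonneg _)

lemma eigenvalue_le_of_forall_inner_apply_self_le (hb : ∀ i, T (b i) = μ i • b i) {c : ℝ}
    (h : ∀ x, ⟪x, T x⟫ ≤ c * ‖x‖ ^ 2) (i : Fin n) : μ i ≤ c := by
  simpa [hb, inner_smul_right] using h (b i)

lemma le_eigenvalue_of_forall_le_inner_apply_self (hb : ∀ i, T (b i) = μ i • b i) {c : ℝ}
    (h : ∀ x, c * ‖x‖ ^ 2 ≤ ⟪x, T x⟫) (i : Fin n) : c ≤ μ i := by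
  simpa [hb, inner_smul_right] using h (b i)

lemma pow_apply_eq_pow_smul {v : E} {c : ℝ} (hv : T v = c • v) (k : ℕ) :
    (T ^ k) v = c ^ k • v := by
  induction k with
  | zero => simp
  | succ k ih => rw [pow_succ', mul_apply_eq_comp, ih, map_smul, hv, smul_smul, pow_succ]

lemma norm_pow_apply_le {c : ℝ} (hc : 0 ≤ c) (h : ∀ y, ‖T y‖ ≤ c * ‖y‖) (k : ℕ) (x : E) :
    ‖(T ^ k) x‖ ≤ c ^ k * ‖x‖ := by
  induction k with
  | zero => simp
  | succ k ih =>
    rw [pow_succ' T, mul_apply_eq_comp, pow_succ' c, mul_assoc]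
    exact (h _).trans (mul_le_mul_of_nonneg_left ih hc)

lemma le_norm_pow_apply {c : ℝ} (hc : 0 ≤ c) (h : ∀ y, c * ‖y‖ ≤ ‖T y‖) (k : ℕ) (x : E) :
    c ^ k * ‖x‖ ≤ ‖(T ^ k) x‖ := by
  induction k with
  | zero => simp
  | succ k ih =>
    rw [pow_succ' T, mul_apply_eq_comp, pow_succ' c, mul_assoc]
    exact (mul_le_mul_of_nonneg_left ih hc).trans (h _)

lemma OrthonormalBasis.le_finrank_orthogonal_span_image_add_card
    (b : OrthonormalBasis (Fin n) ℝ E) (s : Finset (Fin n)) :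
    n ≤ finrank ℝ (Submodule.span ℝ (b '' s))ᗮ + #s := by
  classical
  have := Module.Finite.of_basis b.toBasis
  have hspan : finrank ℝ (Submodule.span ℝ (b '' s)) ≤ #s := by
    rw [← coe_image]
    exact (finrank_span_finset_le_card (s.image b)).trans card_image_le
  have := (Submodule.span ℝ (b '' s)).finrank_add_finrank_orthogonal
  rw [finrank_eq_card_basis b.toBasis, Fintype.card_fin] at this
  omega

lemma Submodule.finrank_add_finrank_le_finrank_inf_add {K V : Type*} [DivisionRing K]
    [AddCommGroup V] [Module K V] [FiniteDimensional K V] (s t : Submodule K V) :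
    finrank K s + finrank K t ≤ finrank K ↥(s ⊓ t) + finrank K V := by
  rw [← finrank_sup_add_finrank_inf_eq]
  have := (s ⊔ t).finrank_le
  omega

theorem eigenvalue_le_of_inner_apply_self_eq {T' : E →L[ℝ] E}
    {b' : OrthonormalBasis (Fin n) ℝ E} {μ' : Fin n → ℝ} (hb : ∀ i, T (b i) = μ i • b i)
    (hb' : ∀ i, T' (b' i) = μ' i • b' i) (hμ : Antitone μ) (hμ' : Antitone μ')
    {S : Submodule ℝ E} {k : ℕ} (hS : n ≤ finrank ℝ S + k)
    (hTS : ∀ x ∈ S, ⟪x, T x⟫ = ⟪x, T' x⟫) {i j : Fin n} (hij : (i : ℕ) + k ≤ j) :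
    μ j ≤ μ' i := by
  have := Module.Finite.of_basis b.toBasis
  have hU := b.le_finrank_orthogonal_span_image_add_card (Ioi j)
  have hV := b'.le_finrank_orthogonal_span_image_add_card (Iio i)
  set U := (Submodule.span ℝ (b '' (Ioi j : Finset (Fin n))))ᗮ
  set V := (Submodule.span ℝ (b' '' (Iio i : Finset (Fin n))))ᗮ
  have hUV := U.finrank_add_finrank_le_finrank_inf_add V
  have hUVS := (U ⊓ V).finrank_add_finrank_le_finrank_inf_add S
  rw [Fin.card_Ioi] at hU
  rw [Fin.card_Iio] at hV
  rw [finrank_eq_card_basis b.toBasis, Fintype.card_fin] at hUV hUVS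
  obtain ⟨x, ⟨⟨hxU, hxV⟩, hxS⟩, hx0⟩ :=
    Submodule.exists_mem_ne_zero_of_ne_bot (p := U ⊓ V ⊓ S) fun h => by
      rw [← Submodule.finrank_eq_zero] at h
      have := j.isLt
      omega
  have hlow : μ j * ‖x‖ ^ 2 ≤ ⟪x, T x⟫ := le_inner_apply_self hb hμ fun l hl =>
    Submodule.inner_right_of_mem_orthogonal
      (Submodule.subset_span (Set.mem_image_of_mem b (by simpa using hl))) hxU
  have hupp : ⟪x, T' x⟫ ≤ μ' i * ‖x‖ ^ 2 := inner_apply_self_le hb' hμ' fun l hl =>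
    Submodule.inner_right_of_mem_orthogonal
      (Submodule.subset_span (Set.mem_image_of_mem b' (by simpa using hl))) hxV
  exact le_of_mul_le_mul_right ((hlow.trans_eq (hTS x hxS)).trans hupp) (by positivity)

end Eigenbasis

lemma Matrix.rank_add_finrank_ker_toEuclideanLin {m n : Type*} [Fintype m] [Fintype n]
    [DecidableEq n] (A : Matrix m n ℝ) :
    A.rank + finrank ℝ (LinearMap.ker (toEuclideanLin A)) = Fintype.card n := by
  rw [rank_eq_finrank_range_toLin A (EuclideanSpace.basisFun m ℝ).toBasis
    (EuclideanSpace.basisFun n ℝ).toBasis, ← toEuclideanLin_eq_toLin_orthonormal,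
    LinearMap.finrank_range_add_finrank_ker, finrank_euclideanSpace]

lemma Matrix.inner_toEuclideanCLM_conjTranspose_mul_self {m : Type*} [Fintype m] [DecidableEq m]
    (A : Matrix m m ℝ) (x : EuclideanSpace ℝ m) :
    ⟪x, toEuclideanCLM (𝕜 := ℝ) (Aᴴ * A) x⟫ = ‖toEuclideanCLM (𝕜 := ℝ) A x‖ ^ 2 := by
  rw [map_mul, ← star_eq_conjTranspose, map_star, ContinuousLinearMap.star_eq_adjoint,
    mul_apply_eq_comp, ContinuousLinearMap.adjoint_inner_right, real_inner_self_eq_norm_sq]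

namespace IsDescSV

section Rectangular

variable {m k : ℕ} {A : Matrix (Fin m) (Fin k) ℝ} {σ : Fin k → ℝ}

lemma nonneg (h : IsDescSV A σ) (i : Fin k) : 0 ≤ σ i := by
  obtain ⟨e, he⟩ := h.2
  rw [← e.apply_symm_apply i, he]
  exact Real.sqrt_nonneg _

lemma antitone_pow (h : IsDescSV A σ) (r : ℕ) : Antitone fun i => σ i ^ r :=
  fun _ _ hil => pow_le_pow_left₀ (h.nonneg _) (h.1 hil) r

lemma exists_orthonormalBasis (h : IsDescSV A σ) :
    ∃ b : OrthonormalBasis (Fin k) ℝ (EuclideanSpace ℝ (Fin k)),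
      ∀ i, toEuclideanCLM (𝕜 := ℝ) (Aᴴ * A) (b i) = σ i ^ 2 • b i := by
  obtain ⟨e, he⟩ := h.2
  set hH := isHermitian_conjTranspose_mul_self A
  refine ⟨hH.eigenvectorBasis.reindex e, fun i => ?_⟩
  have hσ : σ i ^ 2 = hH.eigenvalues (e.symm i) := by
    rw [← e.apply_symm_apply i, he, e.apply_symm_apply,
      Real.sq_sqrt (eigenvalues_conjTranspose_mul_self_nonneg A _)]
  rw [OrthonormalBasis.reindex_apply, hσ]
  exact WithLp.ofLp_injective 2 (by simpa using hH.mulVec_eigenvectorBasis (e.symm i))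

end Rectangular

variable {m : ℕ} {A B : Matrix (Fin m) (Fin m) ℝ} {σ τ : Fin m → ℝ}

lemma norm_apply_le (hσ : IsDescSV A σ) {i : Fin m} (hi : (i : ℕ) = 0)
    (x : EuclideanSpace ℝ (Fin m)) : ‖toEuclideanCLM (𝕜 := ℝ) A x‖ ≤ σ i * ‖x‖ := by
  obtain ⟨b, hb⟩ := hσ.exists_orthonormalBasis
  have h := inner_apply_self_le hb (hσ.antitone_pow 2) (i := i) (x := x) fun l hl => by
    rw [Fin.lt_def] at hl
    omega
  rw [inner_toEuclideanCLM_conjTranspose_mul_self, ← mul_pow] at h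
  exact (sq_le_sq₀ (norm_nonneg _) (mul_nonneg (hσ.nonneg i) (norm_nonneg x))).1 h

lemma le_norm_apply (hσ : IsDescSV A σ) {i : Fin m} (hi : (i : ℕ) + 1 = m)
    (x : EuclideanSpace ℝ (Fin m)) : σ i * ‖x‖ ≤ ‖toEuclideanCLM (𝕜 := ℝ) A x‖ := by
  obtain ⟨b, hb⟩ := hσ.exists_orthonormalBasis
  have h := le_inner_apply_self hb (hσ.antitone_pow 2) (i := i) (x := x) fun l hl => by
    have := l.isLt
    rw [Fin.lt_def] at hl
    omega
  rw [inner_toEuclideanCLM_conjTranspose_mul_self, ← mul_pow] at h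
  exact (sq_le_sq₀ (mul_nonneg (hσ.nonneg i) (norm_nonneg x)) (norm_nonneg _)).1 h

lemma le_pow_of_val_eq_zero (hσ : IsDescSV A σ) {r : ℕ} (hτ : IsDescSV (A ^ r) τ) {i : Fin m}
    (hi : (i : ℕ) = 0) (j : Fin m) : τ j ≤ σ i ^ r := by
  obtain ⟨b, hb⟩ := hτ.exists_orthonormalBasis
  refine (sq_le_sq₀ (hτ.nonneg j) (pow_nonneg (hσ.nonneg i) r)).1
    (eigenvalue_le_of_forall_inner_apply_self_le hb (fun x => ?_) j)
  rw [inner_toEuclideanCLM_conjTranspose_mul_self, map_pow, ← mul_pow]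
  exact pow_le_pow_left₀ (norm_nonneg _)
    (norm_pow_apply_le (hσ.nonneg i) (hσ.norm_apply_le hi) r x) 2

lemma pow_le_of_val_add_one_eq (hσ : IsDescSV A σ) {r : ℕ} (hτ : IsDescSV (A ^ r) τ)
    {i : Fin m} (hi : (i : ℕ) + 1 = m) (j : Fin m) : σ i ^ r ≤ τ j := by
  obtain ⟨b, hb⟩ := hτ.exists_orthonormalBasis
  refine (sq_le_sq₀ (pow_nonneg (hσ.nonneg i) r) (hτ.nonneg j)).1
    (le_eigenvalue_of_forall_le_inner_apply_self hb (fun x => ?_) j)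
  rw [inner_toEuclideanCLM_conjTranspose_mul_self, map_pow, ← mul_pow]
  exact pow_le_pow_left₀ (mul_nonneg (pow_nonneg (hσ.nonneg i) r) (norm_nonneg x))
    (le_norm_pow_apply (hσ.nonneg i) (hσ.le_norm_apply hi) r x) 2

lemma pow_interlace_of_inner_eq (hσ : IsDescSV A σ) (hτ : IsDescSV B τ) {r k : ℕ}
    {S : Submodule ℝ (EuclideanSpace ℝ (Fin m))} (hS : m ≤ finrank ℝ S + k)
    (hST : ∀ x ∈ S, ⟪x, toEuclideanCLM (𝕜 := ℝ) (Bᴴ * B) x⟫ =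
      ⟪x, (toEuclideanCLM (𝕜 := ℝ) (Aᴴ * A) ^ r) x⟫)
    {i l : Fin m} (hil : (i : ℕ) + k ≤ l) : τ l ≤ σ i ^ r ∧ σ l ^ r ≤ τ i := by
  obtain ⟨bσ, hbσ⟩ := hσ.exists_orthonormalBasis
  obtain ⟨bτ, hbτ⟩ := hτ.exists_orthonormalBasis
  have hbσr : ∀ i, (toEuclideanCLM (𝕜 := ℝ) (Aᴴ * A) ^ r) (bσ i) = (σ i ^ r) ^ 2 • bσ i :=
    fun i => by rw [pow_apply_eq_pow_smul (hbσ i), ← pow_mul, ← pow_mul, mul_comm]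
  have hσr : Antitone fun i => (σ i ^ r) ^ 2 := by
    simpa only [← pow_mul] using hσ.antitone_pow (r * 2)
  constructor
  · exact (sq_le_sq₀ (hτ.nonneg l) (pow_nonneg (hσ.nonneg i) r)).1
      (eigenvalue_le_of_inner_apply_self_eq hbτ hbσr (hτ.antitone_pow 2) hσr hS hST hil)
  · exact (sq_le_sq₀ (pow_nonneg (hσ.nonneg l) r) (hτ.nonneg i)).1
      (eigenvalue_le_of_inner_apply_self_eq hbσr hbτ hσr (hτ.antitone_pow 2) hS
        (fun x hx => (hST x hx).symm) hil)

end IsDescSV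

section EndSupported

def endSupported (m a b : ℕ) : Submodule ℝ (Fin m → ℝ) :=
  Submodule.pi {i | a ≤ (i : ℕ) ∧ (i : ℕ) + b < m} fun _ => ⊥

variable {m : ℕ}

lemma mem_endSupported {a b : ℕ} {x : Fin m → ℝ} :
    x ∈ endSupported m a b ↔ ∀ i : Fin m, a ≤ (i : ℕ) → (i : ℕ) + b < m → x i = 0 := by
  simp [endSupported, Submodule.mem_pi]

lemma endSupported_mono {a b a' b' : ℕ} (ha : a ≤ a') (hb : b ≤ b') :
    endSupported m a b ≤ endSupported m a' b' := fun x hx =>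
  mem_endSupported.2 fun i hi hi' => mem_endSupported.1 hx i (by omega) (by omega)

lemma card_filter_lt_or_le_add_le (a b : ℕ) :
    #{i : Fin m | (i : ℕ) < a ∨ m ≤ (i : ℕ) + b} ≤ a + b :=
  calc _ ≤ #(range a ∪ Ico (m - b) m) :=
        card_le_card_of_injOn Fin.val (fun i hi => by
          simp only [coe_filter, mem_univ, true_and, Set.mem_ofPred_eq, coe_union, coe_range,
            coe_Ico, Set.mem_union, Set.mem_Iio, Set.mem_Ico] at hi ⊢
          omega) Fin.val_injective.injOn
    _ ≤ #(range a) + #(Ico (m - b) m) := card_union_le _ _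
    _ ≤ a + b := by rw [card_range, Nat.card_Ico]; omega

lemma rank_le_of_mulVec_mem_endSupported {n : Type*} [Fintype n] [DecidableEq n] {a b : ℕ}
    {A : Matrix (Fin m) n ℝ} (hA : ∀ x, A *ᵥ x ∈ endSupported m a b) : A.rank ≤ a + b := by
  refine (rank_le_card_of_support_subset A _ fun i hi => ?_).trans
    (card_filter_lt_or_le_add_le a b)
  by_contra hi'
  simp only [coe_filter, mem_univ, true_and, Set.mem_ofPred_eq, not_or, not_lt, not_le] at hi'
  exact hi (funext fun j => by
    simpa using mem_endSupported.1 (hA (Pi.single j 1)) i hi'.1 hi'.2)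

end EndSupported

namespace Dmat

variable {m : ℕ}

lemma mulVec_apply_of_succ_eq {i k : Fin m} (h : (k : ℕ) + 1 = i) (x : Fin m → ℝ) :
    (Dmat m *ᵥ x) i = x i - x k := by
  have hne : i ≠ k := fun h' => by simp [h'] at h
  rw [mulVec, dotProduct, Fintype.sum_eq_add i k hne]
  · simp [Dmat, h.symm, sub_eq_add_neg]
  · rintro l ⟨hli, hlk⟩
    have : (i : ℕ) ≠ l := fun h' => hli (Fin.ext h'.symm)
    have : (i : ℕ) ≠ l + 1 := fun h' => hlk (Fin.ext (by omega))
    simp [Dmat, *]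

lemma transpose_mulVec_apply_of_succ_eq {i k : Fin m} (h : (i : ℕ) + 1 = k) (x : Fin m → ℝ) :
    ((Dmat m)ᵀ *ᵥ x) i = x i - x k := by
  have hne : i ≠ k := fun h' => by simp [h'] at h
  rw [mulVec, dotProduct, Fintype.sum_eq_add i k hne]
  · simp [Dmat, h.symm, sub_eq_add_neg]
  · rintro l ⟨hli, hlk⟩
    have : (l : ℕ) ≠ i := fun h' => hli (Fin.ext h')
    have : (l : ℕ) ≠ k := fun h' => hlk (Fin.ext h')
    simp [Dmat, *]

lemma mulVec_mem_endSupported {a b : ℕ} {x : Fin m → ℝ} (hx : x ∈ endSupported m a b) :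
    Dmat m *ᵥ x ∈ endSupported m (a + 1) b := by
  rw [mem_endSupported] at hx ⊢
  intro i hi hi'
  rw [mulVec_apply_of_succ_eq (k := ⟨i - 1, by omega⟩) (by dsimp only; omega),
    hx i (by omega) hi', hx _ (by dsimp only; omega) (by dsimp only; omega), sub_zero]

lemma transpose_mulVec_mem_endSupported {a b : ℕ} {x : Fin m → ℝ}
    (hx : x ∈ endSupported m a b) : (Dmat m)ᵀ *ᵥ x ∈ endSupported m a (b + 1) := by
  rw [mem_endSupported] at hx ⊢
  intro i hi hi'
  rw [transpose_mulVec_apply_of_succ_eq (k := ⟨i + 1, by omega⟩) rfl,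
    hx i hi (by omega), hx _ (by dsimp only; omega) (by dsimp only; omega), sub_zero]

/-- Away from the two corners, `Dᵀ D` and `D Dᵀ` both act as the second difference. -/
lemma commutator_mulVec_mem_endSupported (x : Fin m → ℝ) :
    ((Dmat m)ᵀ * Dmat m - Dmat m * (Dmat m)ᵀ) *ᵥ x ∈ endSupported m 1 1 := by
  rw [mem_endSupported]
  intro i hi hi'
  set ip : Fin m := ⟨i + 1, hi'⟩
  set im : Fin m := ⟨i - 1, by omega⟩
  have hip : (i : ℕ) + 1 = ip := rfl
  have him : (im : ℕ) + 1 = i := by dsimp only [im]; omega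
  rw [sub_mulVec, Pi.sub_apply, ← mulVec_mulVec, ← mulVec_mulVec,
    transpose_mulVec_apply_of_succ_eq hip, mulVec_apply_of_succ_eq him,
    mulVec_apply_of_succ_eq hip, mulVec_apply_of_succ_eq him,
    transpose_mulVec_apply_of_succ_eq hip, transpose_mulVec_apply_of_succ_eq him]
  ring

lemma pow_sub_pow_mulVec_mem_endSupported (k : ℕ) (x : Fin m → ℝ) :
    (((Dmat m)ᵀ * Dmat m) ^ k - (Dmat m * (Dmat m)ᵀ) ^ k) *ᵥ x ∈ endSupported m k k := by
  induction k generalizing x with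
  | zero => simp
  | succ k ih =>
    have hsplit : ((Dmat m)ᵀ * Dmat m) ^ (k + 1) - (Dmat m * (Dmat m)ᵀ) ^ (k + 1) =
        (Dmat m)ᵀ * Dmat m * (((Dmat m)ᵀ * Dmat m) ^ k - (Dmat m * (Dmat m)ᵀ) ^ k) +
          ((Dmat m)ᵀ * Dmat m - Dmat m * (Dmat m)ᵀ) * (Dmat m * (Dmat m)ᵀ) ^ k := by
      rw [pow_succ', pow_succ']
      noncomm_ring
    rw [hsplit, add_mulVec, ← mulVec_mulVec, ← mulVec_mulVec, ← mulVec_mulVec]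
    exact add_mem (transpose_mulVec_mem_endSupported (mulVec_mem_endSupported (ih x)))
      (endSupported_mono (by omega) (by omega) (commutator_mulVec_mem_endSupported _))

lemma transpose_pow_mul_pow_sub_mulVec_mem_endSupported (k : ℕ) (x : Fin m → ℝ) :
    (((Dmat m)ᵀ) ^ k * Dmat m ^ k - ((Dmat m)ᵀ * Dmat m) ^ k) *ᵥ x ∈ endSupported m k k := by
  induction k generalizing x with
  | zero => simp
  | succ k ih =>
    have hconj :
        (Dmat m)ᵀ * (Dmat m * (Dmat m)ᵀ) ^ k * Dmat m = ((Dmat m)ᵀ * Dmat m) ^ (k + 1) := by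
      rw [← mul_pow_mul, Matrix.mul_assoc, pow_succ]
    have hsplit : ((Dmat m)ᵀ) ^ (k + 1) * Dmat m ^ (k + 1) - ((Dmat m)ᵀ * Dmat m) ^ (k + 1) =
        (Dmat m)ᵀ * ((((Dmat m)ᵀ) ^ k * Dmat m ^ k - ((Dmat m)ᵀ * Dmat m) ^ k) +
          (((Dmat m)ᵀ * Dmat m) ^ k - (Dmat m * (Dmat m)ᵀ) ^ k)) * Dmat m := by
      rw [← hconj, pow_succ', pow_succ]
      noncomm_ring
    rw [hsplit, ← mulVec_mulVec, ← mulVec_mulVec, add_mulVec]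
    exact endSupported_mono (by omega) le_rfl (transpose_mulVec_mem_endSupported
      (add_mem (ih _) (pow_sub_pow_mulVec_mem_endSupported k _)))

lemma exists_inner_pow_eq (m r : ℕ) : ∃ S : Submodule ℝ (EuclideanSpace ℝ (Fin m)),
    m ≤ finrank ℝ S + 2 * r ∧ ∀ x ∈ S,
      ⟪x, toEuclideanCLM (𝕜 := ℝ) ((Dmat m ^ r)ᴴ * Dmat m ^ r) x⟫ =
        ⟪x, (toEuclideanCLM (𝕜 := ℝ) ((Dmat m)ᴴ * Dmat m) ^ r) x⟫ := by
  set C := ((Dmat m)ᵀ) ^ r * Dmat m ^ r - ((Dmat m)ᵀ * Dmat m) ^ r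
  refine ⟨LinearMap.ker (toEuclideanLin C), ?_, fun x hx => ?_⟩
  · have hrank := C.rank_add_finrank_ker_toEuclideanLin
    have hC : C.rank ≤ r + r :=
      rank_le_of_mulVec_mem_endSupported (transpose_pow_mul_pow_sub_mulVec_mem_endSupported r)
    rw [Fintype.card_fin] at hrank
    omega
  · have hsplit : (Dmat m ^ r)ᴴ * Dmat m ^ r = ((Dmat m)ᴴ * Dmat m) ^ r + C := by
      simp only [C, conjTranspose_eq_transpose_of_trivial, transpose_pow, add_sub_cancel]
    have hCx : toEuclideanCLM (𝕜 := ℝ) C x = 0 := hx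
    rw [hsplit, map_add, _root_.add_apply, map_pow, hCx, add_zero]

end Dmat

/-- For `m ≥ 2r`, `σ_{min(j+2r, m)}(D)^r ≤ σ_j(D^r) ≤ σ_{max(j−2r, 1)}(D)^r`
for `j = 1, …, m` (1-based, singular values in descending order). -/
theorem singular_values_of_Dr_interlacing (m r : ℕ)
    (σD σDr : Fin m → ℝ)
    (hσD : IsDescSV (Dmat m) σD) (hσDr : IsDescSV ((Dmat m) ^ r) σDr) (j : Fin m) :
    σD ⟨min ((j : ℕ) + 2 * r) (m - 1), by have := j.isLt; omega⟩ ^ r ≤ σDr j ∧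
    σDr j ≤ σD ⟨(j : ℕ) - 2 * r, by have := j.isLt; omega⟩ ^ r := by
  obtain ⟨S, hS, hST⟩ := Dmat.exists_inner_pow_eq m r
  have hj := j.isLt
  constructor
  · by_cases h : (j : ℕ) + 2 * r ≤ m - 1
    · exact (hσD.pow_interlace_of_inner_eq hσDr hS hST (i := j) (by simp [h])).2
    · exact hσD.pow_le_of_val_add_one_eq hσDr (by dsimp only; omega) j
  · by_cases h : 2 * r ≤ (j : ℕ)
    · exact (hσD.pow_interlace_of_inner_eq hσDr hS hST (l := j) (by dsimp only; omega)).1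
    · exact hσD.le_pow_of_val_eq_zero hσDr (by dsimp only; omega) j
end

section
/- Let ξ = (ξ_1, …, ξ_m) with ξ_j ~ N(0, 1/m) i.i.d., and let s_1, …, s_m be positive reals. Then for any γ > 0 and any integer 1 ≤ L ≤ m, P( Σ_{j=1}^m s_j² ξ_j² < γ ) ≤ (e γ m / L)^{L/2} (s_1 s_2 ⋯ s_L)^{−1}. -/
/-!
Chernoff's bound gives `P(X < γ) ≤ e^{tγ/2} E[e^{-tX/2}]` for every `t ≥ 0`. Dropping all but
the first `L` terms of `X = Σ s_j² ξ_j²` only enlarges the event; by independence and the Gaussian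
integral `E[e^{-c ξ²}] = (1 + 2cv)^{-1/2}` for `ξ ~ N(0, v)`, the expectation becomes
`Π_{j<L} (1 + t s_j² / m)^{-1/2} ≤ (m / t)^{L/2} / (s_1 ⋯ s_L)`, and `t = L / γ` gives the bound.
-/

open MeasureTheory ProbabilityTheory Real Finset

open scoped ENNReal NNReal

lemma lintegral_pi_finsetProd {ι : Type*} [Fintype ι] {Ω : ι → Type*}
    [∀ i, MeasurableSpace (Ω i)] {μ : ∀ i, Measure (Ω i)} [∀ i, IsProbabilityMeasure (μ i)]
    (S : Finset ι) {f : ∀ i, Ω i → ℝ≥0∞} (hf : ∀ i, Measurable (f i)) :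
    ∫⁻ ω, ∏ i ∈ S, f i (ω i) ∂Measure.pi μ = ∏ i ∈ S, ∫⁻ x, f i x ∂μ i := by
  rw [lintegral_prod_eq_prod_lintegral_of_indepFun S _
    (iIndepFun_pi (X := f) fun i ↦ (hf i).aemeasurable)
    fun i ↦ (hf i).comp (measurable_pi_apply i)]
  exact prod_congr rfl fun i _ ↦ (measurePreserving_eval μ i).lintegral_comp (hf i)

lemma measure_lt_le_exp_mul_lintegral_exp_neg {α : Type*} [MeasurableSpace α] {μ : Measure α}
    {X : α → ℝ} (hX : Measurable X) (γ : ℝ) {t : ℝ} (ht : 0 ≤ t) :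
    μ {x | X x < γ} ≤ ENNReal.ofReal (exp (t * γ)) * ∫⁻ x, ENNReal.ofReal (exp (-t * X x)) ∂μ := by
  rw [← lintegral_const_mul' _ _ ENNReal.ofReal_ne_top,
    ← lintegral_indicator_one (measurableSet_lt hX measurable_const)]
  refine lintegral_mono fun x ↦ ?_
  by_cases hx : X x < γ
  · rw [Set.indicator_of_mem (s := {x | X x < γ}) hx, Pi.one_apply,
      ← ENNReal.ofReal_mul (exp_pos _).le, ← exp_add, ← ENNReal.ofReal_one]
    exact ENNReal.ofReal_le_ofReal (one_le_exp (by nlinarith))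
  · rw [Set.indicator_of_notMem (s := {x | X x < γ}) hx]
    exact zero_le

lemma lintegral_exp_neg_mul_sq_gaussianReal (v : ℝ≥0) {c : ℝ} (hc : 0 ≤ c) :
    ∫⁻ x, ENNReal.ofReal (exp (-c * x ^ 2)) ∂gaussianReal 0 v
      = ENNReal.ofReal (√(1 + 2 * c * v))⁻¹ := by
  rcases eq_or_ne v 0 with rfl | hv
  · simp [gaussianReal_zero_var]
  set b : ℝ := c + (2 * v : ℝ)⁻¹ with hb_def
  have hb : 0 < b := by positivity
  have hdensity : ∀ x : ℝ, gaussianPDF 0 v x * ENNReal.ofReal (exp (-c * x ^ 2))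
      = ENNReal.ofReal ((√(2 * π * v))⁻¹ * exp (-b * x ^ 2)) := by
    intro x
    rw [gaussianPDF, ← ENNReal.ofReal_mul (gaussianPDFReal_nonneg _ _ _), gaussianPDFReal,
      mul_assoc, ← exp_add]
    congr 3
    rw [hb_def]
    field_simp
    ring
  rw [gaussianReal_of_var_ne_zero 0 hv,
    lintegral_withDensity_eq_lintegral_mul _ (measurable_gaussianPDF 0 v) (by fun_prop)]
  simp_rw [Pi.mul_apply, hdensity]
  rw [← ofReal_integral_eq_lintegral_ofReal ((integrable_exp_neg_mul_sq hb).const_mul _)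
    (.of_forall fun x ↦ by positivity), integral_const_mul, integral_gaussian,
    ← sqrt_inv, ← sqrt_inv, ← sqrt_mul (by positivity)]
  congr 2
  rw [hb_def]
  field_simp
  ring

lemma lintegral_exp_neg_sum_mul_sq_gaussianReal_pi {ι : Type*} [Fintype ι] (v : ℝ≥0)
    (S : Finset ι) {c : ι → ℝ} (hc : ∀ i ∈ S, 0 ≤ c i) :
    ∫⁻ ξ, ENNReal.ofReal (exp (-∑ i ∈ S, c i * ξ i ^ 2)) ∂(Measure.pi fun _ ↦ gaussianReal 0 v)
      = ENNReal.ofReal (∏ i ∈ S, (√(1 + 2 * c i * v))⁻¹) := by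
  have hfactor : ∀ ξ : ι → ℝ, ENNReal.ofReal (exp (-∑ i ∈ S, c i * ξ i ^ 2))
      = ∏ i ∈ S, ENNReal.ofReal (exp (-c i * ξ i ^ 2)) := by
    intro ξ
    rw [← ENNReal.ofReal_prod_of_nonneg fun i _ ↦ (exp_pos _).le, ← exp_sum, ← sum_neg_distrib]
    simp only [neg_mul]
  simp_rw [hfactor]
  rw [lintegral_pi_finsetProd (f := fun i x ↦ ENNReal.ofReal (exp (-c i * x ^ 2))) S
      fun i ↦ by fun_prop,
    ENNReal.ofReal_prod_of_nonneg fun i _ ↦ by positivity]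
  exact prod_congr rfl fun i hi ↦ lintegral_exp_neg_mul_sq_gaussianReal v (hc i hi)

lemma gaussianReal_pi_sum_mul_sq_lt_le {ι : Type*} [Fintype ι] (v : ℝ≥0) {w : ι → ℝ}
    (hw : ∀ i, 0 ≤ w i) (S : Finset ι) (γ : ℝ) {t : ℝ} (ht : 0 ≤ t) :
    Measure.pi (fun _ ↦ gaussianReal 0 v) {ξ : ι → ℝ | ∑ i, w i * ξ i ^ 2 < γ}
      ≤ ENNReal.ofReal (exp (t * γ / 2) * ∏ i ∈ S, (√(1 + t * v * w i))⁻¹) := by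
  have hsub : {ξ : ι → ℝ | ∑ i, w i * ξ i ^ 2 < γ} ⊆ {ξ | ∑ i ∈ S, w i * ξ i ^ 2 < γ} :=
    fun ξ hξ ↦ (sum_le_sum_of_subset_of_nonneg (subset_univ S)
      fun i _ _ ↦ mul_nonneg (hw i) (sq_nonneg _)).trans_lt hξ
  have hexp : ∀ ξ : ι → ℝ,
      -(t / 2) * ∑ i ∈ S, w i * ξ i ^ 2 = -∑ i ∈ S, t / 2 * w i * ξ i ^ 2 := by
    intro ξ
    rw [neg_mul, mul_sum]
    simp only [mul_assoc]
  calc _ ≤ _ := measure_mono hsub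
    _ ≤ ENNReal.ofReal (exp (t / 2 * γ)) * ∫⁻ ξ, ENNReal.ofReal (exp (-(t / 2) *
          ∑ i ∈ S, w i * ξ i ^ 2)) ∂Measure.pi fun _ ↦ gaussianReal 0 v :=
        measure_lt_le_exp_mul_lintegral_exp_neg (by fun_prop) γ (by positivity)
    _ = _ := by
      simp_rw [hexp]
      rw [lintegral_exp_neg_sum_mul_sq_gaussianReal_pi v S fun i _ ↦ by positivity [hw i],
        ← ENNReal.ofReal_mul (exp_pos _).le]
      congr 2
      · rw [div_mul_eq_mul_div]
      · exact prod_congr rfl fun i _ ↦ by ring_nf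

lemma prod_inv_sqrt_one_add_mul_sq_le {ι : Type*} (S : Finset ι) {a : ℝ} (ha : 0 < a)
    {s : ι → ℝ} (hs : ∀ i ∈ S, 0 < s i) :
    ∏ i ∈ S, (√(1 + a * s i ^ 2))⁻¹ ≤ a⁻¹ ^ ((#S : ℝ) / 2) * (∏ i ∈ S, s i)⁻¹ := by
  have hfactor : ∀ i ∈ S, (√(1 + a * s i ^ 2))⁻¹ ≤ √a⁻¹ * (s i)⁻¹ := by
    intro i hi
    calc (√(1 + a * s i ^ 2))⁻¹ ≤ (√(a * s i ^ 2))⁻¹ :=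
          inv_anti₀ (sqrt_pos.2 (by positivity [hs i hi])) (sqrt_le_sqrt (by linarith))
      _ = √a⁻¹ * (s i)⁻¹ := by rw [sqrt_mul ha.le, sqrt_sq (hs i hi).le, mul_inv, sqrt_inv]
  calc _ ≤ ∏ i ∈ S, √a⁻¹ * (s i)⁻¹ := prod_le_prod (fun i _ ↦ by positivity) hfactor
    _ = _ := by
      rw [prod_mul_distrib, prod_const, prod_inv_distrib, rpow_div_two_eq_sqrt _ (by positivity),
        rpow_natCast]

/-- Lower tail bound: if `ξ_j ~ N(0, 1/m)` i.i.d. and `s_j > 0`, then for any `γ > 0`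
and any integer `1 ≤ L ≤ m`,
`P(Σ s_j² ξ_j² < γ) ≤ (e γ m / L)^{L/2} (s_1 ⋯ s_L)⁻¹`. -/
theorem weighted_chi_square_lower_tail (m : ℕ) (hm : 0 < m)
    (s : Fin m → ℝ) (hs : ∀ j, 0 < s j) (γ : ℝ) (hγ : 0 < γ)
    (L : ℕ) (hL1 : 1 ≤ L) (hLm : L ≤ m) :
    (Measure.pi fun _ : Fin m => gaussianReal 0 (m : NNReal)⁻¹)
      {ξ : Fin m → ℝ | ∑ j, (s j) ^ 2 * (ξ j) ^ 2 < γ}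
    ≤ ENNReal.ofReal
        ((Real.exp 1 * γ * m / L) ^ ((L : ℝ) / 2) *
          (∏ j ∈ Finset.univ.filter fun j : Fin m => (j : ℕ) < L, s j)⁻¹) := by
  set S := univ.filter fun j : Fin m => (j : ℕ) < L
  have hS : (#S : ℝ) = L := by simp [S, Fin.card_filter_val_lt, hLm]
  have ht : (0 : ℝ) < L / γ := by positivity
  refine (gaussianReal_pi_sum_mul_sq_lt_le _ (fun j ↦ sq_nonneg (s j)) S γ ht.le).trans
    (ENNReal.ofReal_le_ofReal ?_)
  push_cast
  calc _ ≤ exp (L / γ * γ / 2) * ((L / γ * (m : ℝ)⁻¹)⁻¹ ^ ((#S : ℝ) / 2) * (∏ j ∈ S, s j)⁻¹) :=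
        by gcongr; exact prod_inv_sqrt_one_add_mul_sq_le S (by positivity) fun j _ ↦ hs j
    _ = _ := by
      rw [hS, ← mul_assoc, show L / γ * γ / 2 = (L : ℝ) / 2 by field_simp, ← exp_one_rpow,
        ← mul_rpow (exp_pos 1).le (by positivity)]
      congr 2
      field_simp
end

section
/- Let ξ_j ~ N(0, 1/m) i.i.d., r a positive integer, c_1 > 0, and suppose s_j ≥ c_1 (m/j)^r for j = 1, …, m. Then for any Λ with 1 ≤ Λ ≤ m: P( Σ_{j=1}^m s_j² ξ_j² < c_1² Λ^{2r−1} ) < (60 m/Λ)^{r/2} e^{−m(r − 1/2)/Λ}. -/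
/-!
Chernoff's bound at a negative exponent `-t`: the Gaussian integral
`E exp(-a ξ²) = (1 + 2av)^(-1/2)` factorizes over the coordinates; bounding the factors by `1`
outside a set `T` of `L` indices and by `(2av)^(-1/2)` on `T`, and choosing `t = L / (2γ)`, gives
`P(∑ s_j² ξ_j² ≤ γ) ≤ (eγ / (Lv))^(L/2) / ∏_{j ∈ T} |s_j|`.
For power-law weights take `T` the first `L = ⌊m/Λ⌋` indices, so that
`∏_{j ∈ T} s_j ≥ c₁^L m^(rL) / (L!)^r`. With `x = m/Λ` the bound becomes
`(e / (L x^(2r-1)))^(L/2) (L!)^r`, and Stirling's `L! ≤ e √L (L/e)^L` together with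
`x - 1 < L ≤ x` and `e⁴ < 60` bounds it by `(60x)^(r/2) e^(-(r-1/2)x)`.
-/

open MeasureTheory ProbabilityTheory Real
open scoped ENNReal NNReal Nat Finset

theorem integral_exp_neg_mul_sq_gaussianReal (v : ℝ≥0) {a : ℝ} (ha : 0 ≤ a) :
    ∫ x, exp (-(a * x ^ 2)) ∂gaussianReal 0 v = (√(1 + 2 * a * v))⁻¹ := by
  rcases eq_or_ne v 0 with rfl | hv
  · simp [gaussianReal_zero_var]
  have hv' : (0 : ℝ) < v := by positivity
  have hpdf (x : ℝ) : gaussianPDFReal 0 v x • exp (-(a * x ^ 2))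
      = (√(2 * π * v))⁻¹ * exp (-(a + (2 * (v : ℝ))⁻¹) * x ^ 2) := by
    rw [gaussianPDFReal, smul_eq_mul, mul_assoc, ← exp_add]
    congr 2
    field_simp
    ring
  rw [integral_gaussianReal_eq_integral_smul hv]
  simp_rw [hpdf, integral_const_mul, integral_gaussian, ← sqrt_inv]
  rw [← sqrt_mul (by positivity)]
  congr 1
  field_simp
  ring

theorem mgf_neg_weighted_sum_sq_pi_gaussianReal {ι : Type*} [Fintype ι] (v : ℝ≥0) (s : ι → ℝ)
    {t : ℝ} (ht : 0 ≤ t) :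
    mgf (fun ξ : ι → ℝ => ∑ j, s j ^ 2 * ξ j ^ 2) (Measure.pi fun _ => gaussianReal 0 v) (-t)
      = ∏ j, (√(1 + 2 * (t * s j ^ 2) * v))⁻¹ := by
  have hfactor (ξ : ι → ℝ) :
      exp (-t * ∑ j, s j ^ 2 * ξ j ^ 2) = ∏ j, exp (-(t * s j ^ 2 * ξ j ^ 2)) := by
    rw [← exp_sum, Finset.mul_sum]
    simp only [neg_mul, mul_assoc]
  simp only [mgf, hfactor]
  rw [integral_fintype_prod_eq_prod (fun j x => exp (-(t * s j ^ 2 * x ^ 2)))]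
  exact Finset.prod_congr rfl fun j _ =>
    integral_exp_neg_mul_sq_gaussianReal v (by positivity)

theorem measureReal_pi_gaussianReal_weighted_sum_sq_le_le_exp_mul_prod {ι : Type*} [Fintype ι]
    {v : ℝ≥0} (hv : v ≠ 0) (s : ι → ℝ) (γ : ℝ) {t : ℝ} (ht : 0 < t) {T : Finset ι}
    (hs : ∀ j ∈ T, s j ≠ 0) :
    (Measure.pi fun _ : ι => gaussianReal 0 v).real {ξ | ∑ j, s j ^ 2 * ξ j ^ 2 ≤ γ}
      ≤ exp (t * γ) * ∏ j ∈ T, (√(2 * (t * s j ^ 2) * v))⁻¹ := by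
  have hint : Integrable (fun ξ : ι → ℝ => exp (-t * ∑ j, s j ^ 2 * ξ j ^ 2))
      (Measure.pi fun _ : ι => gaussianReal 0 v) := by
    refine .of_bound (by fun_prop : Measurable _).aestronglyMeasurable 1
      (.of_forall fun ξ => ?_)
    rw [norm_of_nonneg (exp_nonneg _), exp_le_one_iff, neg_mul, neg_nonpos]
    positivity
  have chernoff := measure_le_le_exp_mul_mgf γ (neg_nonpos.mpr ht.le) hint
  rw [mgf_neg_weighted_sum_sq_pi_gaussianReal v s ht.le, neg_neg] at chernoff
  refine chernoff.trans (mul_le_mul_of_nonneg_left ?_ (exp_nonneg _))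
  calc ∏ j, (√(1 + 2 * (t * s j ^ 2) * v))⁻¹ ≤ ∏ j ∈ T, (√(1 + 2 * (t * s j ^ 2) * v))⁻¹ :=
        Finset.prod_le_prod_of_subset_of_le_one T.subset_univ (fun _ _ => by positivity)
          fun j _ _ =>
            inv_le_one_of_one_le₀ (one_le_sqrt.mpr (le_add_of_nonneg_right (by positivity)))
    _ ≤ ∏ j ∈ T, (√(2 * (t * s j ^ 2) * v))⁻¹ := by
        refine Finset.prod_le_prod (fun _ _ => by positivity) fun j hj => ?_
        have : 0 < s j ^ 2 := by positivity [hs j hj]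
        gcongr
        linarith

theorem measureReal_pi_gaussianReal_weighted_sum_sq_le_le {ι : Type*} [Fintype ι] {v : ℝ≥0}
    (hv : v ≠ 0) {s : ι → ℝ} {γ : ℝ} (hγ : 0 < γ) {T : Finset ι} (hT : T.Nonempty)
    (hs : ∀ j ∈ T, s j ≠ 0) :
    (Measure.pi fun _ : ι => gaussianReal 0 v).real {ξ | ∑ j, s j ^ 2 * ξ j ^ 2 ≤ γ}
      ≤ √(exp 1 * γ / (#T * v)) ^ #T / ∏ j ∈ T, |s j| := by
  set t : ℝ := #T / (2 * γ)
  have ht : 0 < t := div_pos (Nat.cast_pos.mpr hT.card_pos) (by positivity)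
  have htγ : 2 * t * γ = #T := by simp only [t]; field_simp
  have hexp : exp (t * γ) = √(exp 1) ^ #T := by
    rw [← exp_half, ← exp_nat_mul]
    congr 1
    linarith
  have hfactor : ∀ j ∈ T, (√(2 * (t * s j ^ 2) * v))⁻¹ = √(γ / (#T * v)) / |s j| := by
    intro j hj
    have hsj : 0 < s j ^ 2 := by positivity [hs j hj]
    rw [← sqrt_inv, ← sqrt_sq_eq_abs, ← sqrt_div' _ hsj.le, ← htγ]
    congr 1
    field_simp
  refine (measureReal_pi_gaussianReal_weighted_sum_sq_le_le_exp_mul_prod hv s γ ht hs).trans_eq ?_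
  rw [hexp, Finset.prod_congr rfl hfactor, Finset.prod_div_distrib, Finset.prod_const,
    mul_div_assoc (exp 1), sqrt_mul (exp_pos 1).le, mul_pow, mul_div_assoc]

theorem factorial_le_exp_one_mul_sqrt_mul_pow {n : ℕ} (hn : n ≠ 0) :
    (n ! : ℝ) ≤ exp 1 * √n * (n / exp 1) ^ n := by
  obtain ⟨k, rfl⟩ := Nat.exists_eq_succ_of_ne_zero hn
  have hseq : Stirling.stirlingSeq (k + 1) ≤ exp 1 / √2 := by
    simpa using Stirling.stirlingSeq'_antitone (Nat.zero_le k)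
  have hpos : 0 < √(2 * (k + 1 : ℕ) : ℝ) * ((k + 1 : ℕ) / exp 1) ^ (k + 1) := by positivity
  rw [Stirling.stirlingSeq, div_le_iff₀ hpos] at hseq
  refine hseq.trans (le_of_eq ?_)
  rw [sqrt_mul zero_le_two]
  field_simp

theorem four_lt_log_sixty : 4 < log 60 := by
  rw [lt_log_iff_exp_lt (by norm_num), show (4 : ℝ) = (4 : ℕ) * 1 by norm_num, exp_nat_mul]
  calc exp 1 ^ 4 < 2.7182818286 ^ 4 := by gcongr; exact exp_one_lt_d9
    _ < 60 := by norm_num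

theorem sqrt_exp_one_div_pow_mul_factorial_pow_lt {x : ℝ} {L r : ℕ} (hL : 0 < L) (hLx : L ≤ x)
    (hxL : x < L + 1) (hr : 0 < r) :
    √(exp 1 / (L * x ^ (2 * (r : ℝ) - 1))) ^ L * (L ! : ℝ) ^ r
      < (60 * x) ^ ((r : ℝ) / 2) * exp (-(x * (r - 1 / 2))) := by
  have hL' : (0 : ℝ) < L := by exact_mod_cast hL
  have hx : 0 < x := hL'.trans_le hLx
  have hr' : (1 : ℝ) ≤ r := by exact_mod_cast hr
  set lL := log L
  set lx := log x
  have hlog : lL ≤ lx := log_le_log hL' hLx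
  have hlhs : log (√(exp 1 / (L * x ^ (2 * (r : ℝ) - 1))) ^ L * (exp 1 * √L * (L / exp 1) ^ L) ^ r)
      = L * ((1 - lL - (2 * r - 1) * lx) / 2) + r * (1 + lL / 2 + L * (lL - 1)) := by
    rw [log_mul (by positivity) (by positivity), log_pow, log_pow, log_sqrt (by positivity),
      log_div (by positivity) (by positivity), log_mul (by positivity) (by positivity),
      log_rpow hx, log_mul (by positivity) (by positivity), log_mul (by positivity) (by positivity),
      log_sqrt hL'.le, log_pow, log_div (by positivity) (by positivity), log_exp]
    ring
  have hrhs : log ((60 * x) ^ ((r : ℝ) / 2) * exp (-(x * (r - 1 / 2))))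
      = r / 2 * (log 60 + lx) - x * (r - 1 / 2) := by
    rw [log_mul (by positivity) (by positivity), log_rpow (by positivity),
      log_mul (by positivity) hx.ne', log_exp]
    ring
  calc _ ≤ √(exp 1 / (L * x ^ (2 * (r : ℝ) - 1))) ^ L * (exp 1 * √L * (L / exp 1) ^ L) ^ r := by
        gcongr
        exact factorial_le_exp_one_mul_sqrt_mul_pow hL.ne'
    _ < _ := by
        rw [← log_lt_log_iff (by positivity) (by positivity), hlhs, hrhs]
        -- the gap is
        -- `(r/2)(log 60 - 4) + 1/2 + (r - 1/2)(1 - (x - L)) + (r/2 + (r - 1/2)L)(lx - lL)`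
        linarith [mul_pos (by positivity : (0 : ℝ) < r) (sub_pos.mpr four_lt_log_sixty),
          mul_le_mul_of_nonneg_left (by linarith : x - L ≤ 1) (by linarith : (0 : ℝ) ≤ r - 1 / 2),
          mul_nonneg (mul_nonneg (by linarith : (0 : ℝ) ≤ r - 1 / 2) hL'.le) (sub_nonneg.mpr hlog),
          mul_nonneg (by linarith : (0 : ℝ) ≤ r) (sub_nonneg.mpr hlog)]

theorem pow_mul_pow_div_factorial_pow_le_prod_castLE {m L r : ℕ} (hLm : L ≤ m) {c : ℝ}
    (hc : 0 ≤ c) {s : Fin m → ℝ} (hs : ∀ j : Fin m, c * ((m : ℝ) / ((j : ℕ) + 1)) ^ r ≤ s j) :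
    c ^ L * (m : ℝ) ^ (r * L) / (L ! : ℝ) ^ r ≤ ∏ i : Fin L, s (Fin.castLE hLm i) := by
  calc c ^ L * (m : ℝ) ^ (r * L) / (L ! : ℝ) ^ r
      = ∏ i : Fin L, c * ((m : ℝ) / ((i : ℕ) + 1)) ^ r := by
        rw [Fin.prod_univ_eq_prod_range (fun i => c * ((m : ℝ) / (i + 1)) ^ r),
          ← Finset.prod_range_add_one_eq_factorial]
        simp only [Finset.prod_mul_distrib, div_pow, Finset.prod_div_distrib, Finset.prod_const,
          Finset.card_range, Finset.prod_pow, Nat.cast_prod]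
        push_cast
        rw [pow_mul, mul_div_assoc]
    _ ≤ ∏ i : Fin L, s (Fin.castLE hLm i) :=
        Finset.prod_le_prod (fun _ _ => by positivity) fun i _ => hs (Fin.castLE hLm i)

theorem measureReal_pi_gaussianReal_power_law_weighted_sum_sq_le_le {m L r : ℕ} (hL : 0 < L)
    (hLm : L ≤ m) {c₁ : ℝ} (hc₁ : 0 < c₁) {s : Fin m → ℝ}
    (hs : ∀ j : Fin m, c₁ * ((m : ℝ) / ((j : ℕ) + 1)) ^ r ≤ s j) {Λ : ℝ} (hΛ : 0 < Λ) :
    (Measure.pi fun _ : Fin m => gaussianReal 0 (m : ℝ≥0)⁻¹).real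
        {ξ | ∑ j, s j ^ 2 * ξ j ^ 2 ≤ c₁ ^ 2 * Λ ^ (2 * (r : ℝ) - 1)}
      ≤ √(exp 1 / (L * (m / Λ) ^ (2 * (r : ℝ) - 1))) ^ L * (L ! : ℝ) ^ r := by
  have hm : 0 < m := hL.trans_le hLm
  have hm' : (0 : ℝ) < m := by exact_mod_cast hm
  have hspos (j : Fin m) : 0 < s j := (by positivity : 0 < c₁ * _).trans_le (hs j)
  have tail := measureReal_pi_gaussianReal_weighted_sum_sq_le_le (v := (m : ℝ≥0)⁻¹)
    (by simpa using hm.ne') (by positivity : 0 < c₁ ^ 2 * Λ ^ (2 * (r : ℝ) - 1))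
    (T := Finset.univ.map (Fin.castLEEmb hLm))
    ⟨_, Finset.mem_map_of_mem _ (Finset.mem_univ ⟨0, hL⟩)⟩ (s := s) fun j _ => (hspos j).ne'
  simp only [Finset.card_map, Finset.card_univ, Fintype.card_fin, Finset.prod_map,
    Fin.castLEEmb_apply, abs_of_pos (hspos _)] at tail
  have hsqrt : √(exp 1 * (c₁ ^ 2 * Λ ^ (2 * (r : ℝ) - 1)) / (L * ((m : ℝ≥0)⁻¹ : ℝ≥0))) ^ L
      = c₁ ^ L * (m : ℝ) ^ (r * L) * √(exp 1 / (L * (m / Λ) ^ (2 * (r : ℝ) - 1))) ^ L := by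
    have hrpow : ((m : ℝ) / Λ) ^ (2 * (r : ℝ) - 1) = m ^ (2 * r) / m / Λ ^ (2 * (r : ℝ) - 1) := by
      rw [div_rpow hm'.le hΛ.le, rpow_sub hm', rpow_one, ← Nat.cast_ofNat, ← Nat.cast_mul,
        rpow_natCast]
    rw [hrpow, pow_mul, ← mul_pow, ← mul_pow, ← abs_of_pos (by positivity : 0 < c₁ * m ^ r),
      ← sqrt_sq_eq_abs, ← sqrt_mul (sq_nonneg _)]
    congr 2
    push_cast
    field_simp
    ring
  refine tail.trans ?_
  rw [hsqrt]
  calc _ ≤ c₁ ^ L * (m : ℝ) ^ (r * L) * √(exp 1 / (L * (m / Λ) ^ (2 * (r : ℝ) - 1))) ^ L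
        / (c₁ ^ L * (m : ℝ) ^ (r * L) / (L ! : ℝ) ^ r) :=
        div_le_div_of_nonneg_left (by positivity) (by positivity)
          (pow_mul_pow_div_factorial_pow_le_prod_castLE hLm hc₁.le hs)
    _ = _ := by field_simp

theorem weighted_chi_square_lower_tail_power_law_general (m : ℕ)
    (r : ℕ) (hr : 0 < r) (c₁ : ℝ) (hc₁ : 0 < c₁)
    (s : Fin m → ℝ) (hs : ∀ j : Fin m, c₁ * ((m : ℝ) / ((j : ℕ) + 1)) ^ r ≤ s j)
    (Λ : ℝ) (hΛ1 : 1 ≤ Λ) (hΛm : Λ ≤ m) :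
    (Measure.pi fun _ : Fin m => gaussianReal 0 (m : NNReal)⁻¹)
      {ξ : Fin m → ℝ | ∑ j, (s j) ^ 2 * (ξ j) ^ 2 < c₁ ^ 2 * Λ ^ (2 * (r : ℝ) - 1)}
    < ENNReal.ofReal
        ((60 * m / Λ) ^ ((r : ℝ) / 2) * Real.exp (-(m * ((r : ℝ) - 1/2) / Λ))) := by
  set L := ⌊(m : ℝ) / Λ⌋₊
  have hΛ0 : 0 < Λ := one_pos.trans_le hΛ1
  have hL : 0 < L := Nat.floor_pos.mpr ((one_le_div hΛ0).mpr hΛm)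
  have hLx : (L : ℝ) ≤ m / Λ := Nat.floor_le (by positivity)
  have hLm : L ≤ m := by exact_mod_cast hLx.trans (div_le_self (by positivity) hΛ1)
  have hend := sqrt_exp_one_div_pow_mul_factorial_pow_lt hL hLx (Nat.lt_floor_add_one _) hr
  rw [show -((m : ℝ) / Λ * (r - 1 / 2)) = -(m * (r - 1 / 2) / Λ) by ring, ← mul_div_assoc] at hend
  calc _ ≤ (Measure.pi fun _ : Fin m => gaussianReal 0 (m : NNReal)⁻¹)
        {ξ : Fin m → ℝ | ∑ j, (s j) ^ 2 * (ξ j) ^ 2 ≤ c₁ ^ 2 * Λ ^ (2 * (r : ℝ) - 1)} :=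
        measure_mono (Set.ofPred_subset_ofPred.mpr fun _ => le_of_lt)
    _ = _ := (ofReal_measureReal).symm
    _ < _ := (ENNReal.ofReal_lt_ofReal_iff_of_nonneg measureReal_nonneg).mpr
        ((measureReal_pi_gaussianReal_power_law_weighted_sum_sq_le_le hL hLm hc₁ hs hΛ0).trans_lt
          hend)

/-- If `ξ_j ~ N(0, 1/m)` i.i.d., `r ≥ 1`, `c₁ > 0`, and `s_j ≥ c₁ (m/j)^r`, then for
`1 ≤ Λ ≤ m`, `P(Σ s_j² ξ_j² < c₁² Λ^{2r−1}) < (60 m/Λ)^{r/2} e^{−m(r − 1/2)/Λ}`. -/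
theorem weighted_chi_square_lower_tail_power_law (m : ℕ) (hm : 0 < m)
    (r : ℕ) (hr : 0 < r) (c₁ : ℝ) (hc₁ : 0 < c₁)
    (s : Fin m → ℝ) (hs : ∀ j : Fin m, c₁ * ((m : ℝ) / ((j : ℕ) + 1)) ^ r ≤ s j)
    (Λ : ℝ) (hΛ1 : 1 ≤ Λ) (hΛm : Λ ≤ m) :
    (Measure.pi fun _ : Fin m => gaussianReal 0 (m : NNReal)⁻¹)
      {ξ : Fin m → ℝ | ∑ j, (s j) ^ 2 * (ξ j) ^ 2 < c₁ ^ 2 * Λ ^ (2 * (r : ℝ) - 1)}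
    < ENNReal.ofReal
        ((60 * m / Λ) ^ ((r : ℝ) / 2) * Real.exp (-(m * ((r : ℝ) - 1/2) / Λ))) :=
  weighted_chi_square_lower_tail_power_law_general m r hr c₁ hc₁ s hs Λ hΛ1 hΛm
end

section
/- Let x, x' ∈ R^N with ‖x − x'‖₂ ≤ η, let T = supp(x) with |T| = k, and for k ≤ k' ≤ N−1 let T' be the support of (any of) the k' largest-magnitude entries of x'. Then ‖x restricted to T\T'‖₂ ≤ β η where β ≤ (1 + k/k')^{1/2}. -/
/-!
Let `R = T \ T'` be the missed support and `E = T' \ T`. Since `x` vanishes on `E`,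
`|x'| = |x - x'|` there, and every `|x' j|` with `j ∈ R` is at most every `|x' i|` with `i ∈ E`.
Averaging over `R × E`, together with `|R| ≤ |E|` (from `k ≤ k'`), gives
`‖x'_R‖² ≤ (k / k') ‖(x - x')_E‖²`. Then `‖x_R‖ ≤ ‖(x - x')_R‖ + ‖x'_R‖`, and Cauchy–Schwarz
in `ℝ²` bounds this by `√(1 + k / k') (‖(x - x')_R‖² + ‖(x - x')_E‖²)^{1/2} ≤ √(1 + k / k') η`,
because `R` and `E` are disjoint.
-/

open Finset

theorem card_nsmul_sum_le_card_nsmul_sum {ι M : Type*} [AddCommMonoid M] [PartialOrder M]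
    [IsOrderedAddMonoid M] {s t : Finset ι} {f : ι → M} (h : ∀ i ∈ s, ∀ j ∈ t, f i ≤ f j) :
    #t • ∑ i ∈ s, f i ≤ #s • ∑ j ∈ t, f j :=
  calc #t • ∑ i ∈ s, f i = ∑ j ∈ t, ∑ i ∈ s, f i := by rw [sum_const]
    _ ≤ ∑ j ∈ t, ∑ _i ∈ s, f j := sum_le_sum fun j hj => sum_le_sum fun i hi => h i hi j hj
    _ = #s • ∑ j ∈ t, f j := by simp only [sum_const, smul_sum]

section TopSet

variable {ι K : Type*} [DecidableEq ι] [Field K] [LinearOrder K] [IsStrictOrderedRing K]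
  {s t : Finset ι} {f : ι → K}

theorem card_mul_sum_sdiff_le_card_mul_sum_sdiff (hf : ∀ i ∈ t, 0 ≤ f i)
    (htop : ∀ i ∈ t, ∀ j ∉ t, f j ≤ f i) (hst : #s ≤ #t) :
    #t * ∑ i ∈ s \ t, f i ≤ #s * ∑ i ∈ t \ s, f i := by
  have hcross : #(t \ s) • ∑ i ∈ s \ t, f i ≤ #(s \ t) • ∑ i ∈ t \ s, f i :=
    card_nsmul_sum_le_card_nsmul_sum fun i hi j hj =>
      htop j (mem_sdiff.1 hj).1 i (mem_sdiff.1 hi).2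
  simp only [nsmul_eq_mul] at hcross
  have hcard : #(s \ t) ≤ #(t \ s) := card_sdiff_le_card_sdiff_iff.2 hst
  have hS₂ : 0 ≤ ∑ i ∈ t \ s, f i := sum_nonneg fun i hi => hf i (mem_sdiff.1 hi).1
  have hS : ∑ i ∈ s \ t, f i ≤ ∑ i ∈ t \ s, f i := by
    rcases (#(t \ s)).eq_zero_or_pos with h0 | hpos
    · rw [card_eq_zero.1 (Nat.le_zero.1 (hcard.trans h0.le)), sum_empty]; exact hS₂
    · have : (#(s \ t) : K) ≤ #(t \ s) := by exact_mod_cast hcard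
      have hpos' : (0 : K) < #(t \ s) := by exact_mod_cast hpos
      exact le_of_mul_le_mul_left (hcross.trans (mul_le_mul_of_nonneg_right this hS₂)) hpos'
  rw [← card_sdiff_add_card_inter s t, ← card_sdiff_add_card_inter t s, inter_comm]
  push_cast
  rw [add_mul, add_mul]
  linarith [mul_le_mul_of_nonneg_left hS (Nat.cast_nonneg (α := K) #(s ∩ t))]

theorem sum_sdiff_le_div_mul_sum_sdiff (hf : ∀ i ∈ t, 0 ≤ f i)
    (htop : ∀ i ∈ t, ∀ j ∉ t, f j ≤ f i) (hst : #s ≤ #t) :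
    ∑ i ∈ s \ t, f i ≤ #s / #t * ∑ i ∈ t \ s, f i := by
  rcases (#t).eq_zero_or_pos with ht | ht
  · simp [card_eq_zero.1 (Nat.le_zero.1 (hst.trans ht.le))]
  · rw [div_mul_eq_mul_div, le_div_iff₀ (by exact_mod_cast ht), mul_comm]
    exact card_mul_sum_sdiff_le_card_mul_sum_sdiff hf htop hst

end TopSet

theorem sqrt_sum_add_sq_le {ι : Type*} (s : Finset ι) (y z : ι → ℝ) :
    √(∑ i ∈ s, (y i + z i) ^ 2) ≤ √(∑ i ∈ s, y i ^ 2) + √(∑ i ∈ s, z i ^ 2) := by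
  have hy : 0 ≤ ∑ i ∈ s, y i ^ 2 := sum_nonneg fun i _ => sq_nonneg _
  have hz : 0 ≤ ∑ i ∈ s, z i ^ 2 := sum_nonneg fun i _ => sq_nonneg _
  rw [Real.sqrt_le_left (by positivity), add_sq, Real.sq_sqrt hy, Real.sq_sqrt hz]
  have hexpand : ∑ i ∈ s, (y i + z i) ^ 2
      = ∑ i ∈ s, y i ^ 2 + 2 * ∑ i ∈ s, y i * z i + ∑ i ∈ s, z i ^ 2 := by
    simp only [add_sq, sum_add_distrib, mul_sum, mul_assoc]
  linarith [Real.sum_mul_le_sqrt_mul_sqrt s y z]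

theorem sqrt_add_sqrt_mul_le {u v c : ℝ} (hu : 0 ≤ u) (hv : 0 ≤ v) (hc : 0 ≤ c) :
    √u + √(c * v) ≤ √(1 + c) * √(u + v) := by
  simpa [Fin.sum_univ_two, Real.sq_sqrt, hu, hv, hc, Real.sqrt_mul hc] using
    Real.sum_mul_le_sqrt_mul_sqrt univ ![1, √c] ![√u, √v]

theorem support_recovery_missed_energy_general (N k k' : ℕ) (x x' : Fin N → ℝ) (η : ℝ)
    (hdist : Real.sqrt (∑ j, (x j - x' j) ^ 2) ≤ η)
    (T : Finset (Fin N)) (hT : T = Finset.univ.filter fun j => x j ≠ 0) (hk : T.card = k)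
    (hkk' : k ≤ k')
    (T' : Finset (Fin N)) (hT'card : T'.card = k')
    (hT' : ∀ i ∈ T', ∀ j ∉ T', |x' j| ≤ |x' i|) :
    Real.sqrt (∑ j ∈ T \ T', (x j) ^ 2) ≤ Real.sqrt (1 + (k : ℝ) / k') * η := by
  have hmissed : ∑ j ∈ T \ T', x' j ^ 2 ≤ k / k' * ∑ j ∈ T' \ T, (x j - x' j) ^ 2 := by
    have hxE : ∀ j ∈ T' \ T, (x j - x' j) ^ 2 = x' j ^ 2 := fun j hj => by
      have hx0 : x j = 0 := by simpa [hT] using (mem_sdiff.1 hj).2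
      rw [hx0, zero_sub, neg_sq]
    rw [sum_congr rfl hxE, ← hk, ← hT'card]
    exact sum_sdiff_le_div_mul_sum_sdiff (fun _ _ => sq_nonneg _)
      (fun i hi j hj => sq_le_sq.2 (hT' i hi j hj)) (hk ▸ hT'card ▸ hkk')
  have hsplit : ∑ j ∈ T \ T', (x j - x' j) ^ 2 + ∑ j ∈ T' \ T, (x j - x' j) ^ 2
      ≤ ∑ j, (x j - x' j) ^ 2 := by
    rw [← sum_union disjoint_sdiff_sdiff]
    exact sum_le_sum_of_subset_of_nonneg (subset_univ _) fun _ _ _ => sq_nonneg _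
  calc √(∑ j ∈ T \ T', x j ^ 2)
      ≤ √(∑ j ∈ T \ T', (x j - x' j) ^ 2) + √(∑ j ∈ T \ T', x' j ^ 2) := by
        simpa using sqrt_sum_add_sq_le (T \ T') (fun j => x j - x' j) x'
    _ ≤ √(∑ j ∈ T \ T', (x j - x' j) ^ 2) + √(k / k' * ∑ j ∈ T' \ T, (x j - x' j) ^ 2) := by
        gcongr
    _ ≤ √(1 + k / k') * √(∑ j ∈ T \ T', (x j - x' j) ^ 2 + ∑ j ∈ T' \ T, (x j - x' j) ^ 2) :=
        sqrt_add_sqrt_mul_le (sum_nonneg fun _ _ => sq_nonneg _)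
          (sum_nonneg fun _ _ => sq_nonneg _) (by positivity)
    _ ≤ √(1 + k / k') * η := by
        gcongr
        exact (Real.sqrt_le_sqrt hsplit).trans hdist

/-- If `‖x − x'‖₂ ≤ η`, `T = supp(x)` with `|T| = k`, and `T'` is the index set of (any of)
the `k'` largest-magnitude entries of `x'` for `k ≤ k' ≤ N − 1`, then
`‖x_{T \ T'}‖₂ ≤ (1 + k/k')^{1/2} η`. -/
theorem support_recovery_missed_energy (N k k' : ℕ) (x x' : Fin N → ℝ) (η : ℝ) (hη : 0 ≤ η)
    (hdist : Real.sqrt (∑ j, (x j - x' j) ^ 2) ≤ η)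
    (T : Finset (Fin N)) (hT : T = Finset.univ.filter fun j => x j ≠ 0) (hk : T.card = k)
    (hkk' : k ≤ k') (hk'N : k' ≤ N - 1)
    (T' : Finset (Fin N)) (hT'card : T'.card = k')
    (hT' : ∀ i ∈ T', ∀ j ∉ T', |x' j| ≤ |x' i|) :
    Real.sqrt (∑ j ∈ T \ T', (x j) ^ 2) ≤ Real.sqrt (1 + (k : ℝ) / k') * η :=
  support_recovery_missed_energy_general N k k' x x' η hdist T hT hk hkk' T' hT'card hT'
end

section
/- Let x, x' ∈ R^N with ‖x − x'‖₂ ≤ η, T = supp(x), |T| = k, and k ≤ k' ≤ N−1. If |x_j| > γη for all j ∈ T, where γ = (1 + 1/(k'−k+1))^{1/2}, then the support T' of the k' largest-magnitude entries of x' contains T. -/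
/-!
Suppose some `j ∈ T` is missed by `T'`. Since `|T' ∩ T| ≤ k - 1`, at least `m = k' - k + 1`
indices of `T'` lie off the support of `x`, and at each of them `x` vanishes while
`|x'| ≥ |x'_j|`. Hence `η² ≥ (x_j - x'_j)² + m x'_j²`, and minimising over `x'_j` gives
`η² ≥ m/(m+1) · x_j²`, i.e. `|x_j| ≤ √(1 + 1/m) η`.
-/

open Finset

theorem Finset.card_add_one_le_card_sdiff_add_card {α : Type*} [DecidableEq α]
    {s t : Finset α} {j : α} (hjt : j ∈ t) (hjs : j ∉ s) :
    #s + 1 ≤ #(s \ t) + #t := by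
  have hlt : #(s ∩ t) < #t :=
    card_lt_card ⟨inter_subset_right, fun h => hjs (mem_of_mem_inter_left (h hjt))⟩
  have := card_sdiff_add_card_inter s t
  omega

theorem sq_sub_add_card_mul_sq_le_sum_sq_sub {ι : Type*} [Fintype ι] (x y : ι → ℝ)
    {S : Finset ι} {j : ι} (hjS : j ∉ S) (hxS : ∀ i ∈ S, x i = 0)
    (hyS : ∀ i ∈ S, |y j| ≤ |y i|) :
    (x j - y j) ^ 2 + #S * y j ^ 2 ≤ ∑ i, (x i - y i) ^ 2 := by
  have hS : #S * y j ^ 2 ≤ ∑ i ∈ S, (x i - y i) ^ 2 := by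
    have := card_nsmul_le_sum S (fun i => (x i - y i) ^ 2) (y j ^ 2) fun i hi => by
      rw [hxS i hi, zero_sub, neg_sq, ← sq_abs, ← sq_abs (y i)]
      exact pow_le_pow_left₀ (abs_nonneg _) (hyS i hi) 2
    rwa [nsmul_eq_mul] at this
  calc (x j - y j) ^ 2 + #S * y j ^ 2
      ≤ (x j - y j) ^ 2 + ∑ i ∈ S, (x i - y i) ^ 2 := by gcongr
    _ = ∑ i ∈ cons j S hjS, (x i - y i) ^ 2 := (sum_cons (f := fun i => (x i - y i) ^ 2) hjS).symm
    _ ≤ ∑ i, (x i - y i) ^ 2 :=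
      sum_le_sum_of_subset_of_nonneg (subset_univ _) fun i _ _ => sq_nonneg _

-- The defect is the square `(a - (m + 1) t) ^ 2`.
theorem mul_sq_le_add_one_mul_sq_sub_add_mul_sq (m a t : ℝ) :
    m * a ^ 2 ≤ (m + 1) * ((a - t) ^ 2 + m * t ^ 2) := by
  nlinarith [sq_nonneg (a - (m + 1) * t)]

theorem abs_le_sqrt_one_add_one_div_mul_of_sq_sub_add_mul_sq_le {m a t η : ℝ}
    (hm : 0 < m) (hη : 0 ≤ η) (h : (a - t) ^ 2 + m * t ^ 2 ≤ η ^ 2) :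
    |a| ≤ √(1 + 1 / m) * η := by
  have hsq : a ^ 2 ≤ (1 + 1 / m) * η ^ 2 := by
    have := (mul_sq_le_add_one_mul_sq_sub_add_mul_sq m a t).trans
      (mul_le_mul_of_nonneg_left h (by linarith))
    rw [one_add_div hm.ne', div_mul_eq_mul_div, le_div_iff₀ hm, mul_comm]
    linarith
  calc |a| = √(a ^ 2) := (Real.sqrt_sq_eq_abs a).symm
    _ ≤ √((1 + 1 / m) * η ^ 2) := Real.sqrt_le_sqrt hsq
    _ = √(1 + 1 / m) * η := by
      rw [Real.sqrt_mul (by positivity), Real.sqrt_sq hη]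

theorem support_recovery_inclusion_general (N k k' : ℕ) (x x' : Fin N → ℝ) (η : ℝ)
    (hdist : Real.sqrt (∑ j, (x j - x' j) ^ 2) ≤ η)
    (T : Finset (Fin N)) (hT : T = Finset.univ.filter fun j => x j ≠ 0) (hk : T.card = k)
    (hkk' : k ≤ k')
    (hbig : ∀ j ∈ T, Real.sqrt (1 + 1 / ((k' : ℝ) - k + 1)) * η < |x j|)
    (T' : Finset (Fin N)) (hT'card : T'.card = k')
    (hT' : ∀ i ∈ T', ∀ j ∉ T', |x' j| ≤ |x' i|) :
    T ⊆ T' := by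
  intro j hj
  by_contra hjT'
  have hη : 0 ≤ η := (Real.sqrt_nonneg _).trans hdist
  have hcard : (k' : ℝ) - k + 1 ≤ #(T' \ T) := by
    have := card_add_one_le_card_sdiff_add_card hj hjT'
    rw [hk, hT'card] at this
    have : (k' : ℝ) + 1 ≤ #(T' \ T) + k := mod_cast this
    linarith
  have henergy := sq_sub_add_card_mul_sq_le_sum_sq_sub x x'
    (S := T' \ T) (fun h => (mem_sdiff.mp h).2 hj)
    (fun i hi => by simpa [hT] using (mem_sdiff.mp hi).2)
    (fun i hi => hT' i (mem_sdiff.mp hi).1 j hjT')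
  have hsum := (Real.sqrt_le_left hη).mp hdist
  have hm : (0 : ℝ) < k' - k + 1 := by
    have : (k : ℝ) ≤ k' := by exact_mod_cast hkk'
    linarith
  refine (hbig j hj).not_ge
    (abs_le_sqrt_one_add_one_div_mul_of_sq_sub_add_mul_sq_le (t := x' j) hm hη ?_)
  calc (x j - x' j) ^ 2 + ((k' : ℝ) - k + 1) * x' j ^ 2
      ≤ (x j - x' j) ^ 2 + #(T' \ T) * x' j ^ 2 := by gcongr
    _ ≤ η ^ 2 := henergy.trans hsum

/-- If `‖x − x'‖₂ ≤ η`, `T = supp(x)` with `|T| = k`, `k ≤ k' ≤ N − 1`, and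
`|x_j| > γη` for all `j ∈ T` where `γ = (1 + 1/(k'−k+1))^{1/2}`, then the index set `T'`
of the `k'` largest-magnitude entries of `x'` contains `T`. -/
theorem support_recovery_inclusion (N k k' : ℕ) (x x' : Fin N → ℝ) (η : ℝ) (hη : 0 ≤ η)
    (hdist : Real.sqrt (∑ j, (x j - x' j) ^ 2) ≤ η)
    (T : Finset (Fin N)) (hT : T = Finset.univ.filter fun j => x j ≠ 0) (hk : T.card = k)
    (hkk' : k ≤ k') (hk'N : k' ≤ N - 1)
    (hbig : ∀ j ∈ T, Real.sqrt (1 + 1 / ((k' : ℝ) - k + 1)) * η < |x j|)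
    (T' : Finset (Fin N)) (hT'card : T'.card = k')
    (hT' : ∀ i ∈ T', ∀ j ∉ T', |x' j| ≤ |x' i|) :
    T ⊆ T' :=
  support_recovery_inclusion_general N k k' x x' η hdist T hT hk hkk' hbig T' hT'card hT'
end

section
/- Let E be a full-rank m×k real matrix (m ≥ k), r a positive integer, and D the m×m difference matrix. Among all left inverses F of E (k×m matrices with FE = I), the operator norm ‖F D^r‖_{ℓ₂→ℓ₂} is minimized by the Sobolev dual F_{sob,r} determined by F_{sob,r} D^r = (D^{−r} E)^†, where A^† = (A*A)^{−1}A* is the Moore–Penrose pseudoinverse. Moreover, the minimum value equals 1/σ_min(D^{−r}E). -/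
/-!
Put `A = D⁻ʳ E`. Left inverses `F` of `E` correspond to left inverses `G = F Dʳ` of `A`, and the
Sobolev dual to the pseudoinverse `A† = (AᵀA)⁻¹Aᵀ`. If `v` is a unit eigenvector of `AᵀA` for its
smallest eigenvalue `σ²`, then `‖A v‖ = σ` and `1 = ‖G (A v)‖ ≤ ‖G‖ σ`, so every left inverse has
norm at least `1/σ`. Conversely `A A†` is the orthogonal projection onto the range of `A`, so
`σ ‖A† y‖ ≤ ‖A A† y‖ ≤ ‖y‖`, i.e. `‖A†‖ ≤ 1/σ`.
-/
open Matrix Real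

/-- Euclidean (ℓ₂) norm of a finite real vector. -/
noncomputable def e2norm {n : ℕ} (v : Fin n → ℝ) : ℝ :=
  Real.sqrt (∑ i, (v i) ^ 2)

/-- `ℓ₂ → ℓ₂` operator norm of a rectangular real matrix. -/
noncomputable def opNorm2 {a b : ℕ} (M : Matrix (Fin a) (Fin b) ℝ) : ℝ :=
  sSup {y | ∃ x : Fin b → ℝ, e2norm x ≤ 1 ∧ y = e2norm (M.mulVec x)}

/-- Smallest singular value of a rectangular real matrix. -/
noncomputable def sigmaMin {a b : ℕ} (M : Matrix (Fin a) (Fin b) ℝ) : ℝ :=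
  Real.sqrt (⨅ i, (show (Mᵀ * M).IsHermitian by
    rw [← Matrix.conjTranspose_eq_transpose_of_trivial]
    exact Matrix.isHermitian_conjTranspose_mul_self M).eigenvalues i)

theorem Dmat_det (m : ℕ) : (Dmat m).det = 1 := by
  rw [det_of_isLowerTriangular _ fun i j hij => by
    have : (i : ℕ) < j := hij
    simp only [Dmat, of_apply]; rw [if_neg (by omega), if_neg (by omega)]]
  simp [Dmat]

theorem Matrix.mulVec_injective_of_rank_eq_card {m n : Type*} [Fintype n] {K : Type*} [Field K]
    {A : Matrix m n K} (hA : A.rank = Fintype.card n) : Function.Injective A.mulVec := by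
  have := LinearMap.finrank_range_add_finrank_ker A.mulVecLin
  rw [← rank, hA, Module.finrank_fintype_fun_eq_card, add_eq_left,
    Submodule.finrank_eq_zero] at this
  exact LinearMap.ker_eq_bot.mp this

theorem Matrix.IsHermitian.iInf_eigenvalues_mul_dotProduct_le {n : Type*} [Fintype n]
    [DecidableEq n] {M : Matrix n n ℝ} (hM : M.IsHermitian) (x : n → ℝ) :
    (⨅ i, hM.eigenvalues i) * (x ⬝ᵥ x) ≤ x ⬝ᵥ (M *ᵥ x) := by
  set c := ⨅ i, hM.eigenvalues i
  have hpsd : (M - algebraMap ℝ (Matrix n n ℝ) c).PosSemidef := by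
    rw [posSemidef_iff_isHermitian_and_spectrum_nonneg]
    refine ⟨hM.sub (IsSelfAdjoint.algebraMap _ (.all c)), ?_⟩
    rw [← spectrum.sub_singleton_eq, hM.spectrum_real_eq_range_eigenvalues]
    rintro _ ⟨_, ⟨i, rfl⟩, _, rfl, rfl⟩
    exact sub_nonneg.mpr (ciInf_le (Finite.bddBelow_range hM.eigenvalues) i)
  have := hpsd.dotProduct_mulVec_nonneg x
  simpa [sub_mulVec, Algebra.algebraMap_eq_smul_one, smul_mulVec] using this

theorem Matrix.IsHermitian.exists_dotProduct_mulVec_eq_iInf_eigenvalues {n : Type*} [Fintype n]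
    [DecidableEq n] [Nonempty n] {M : Matrix n n ℝ} (hM : M.IsHermitian) :
    ∃ v : n → ℝ, v ⬝ᵥ v = 1 ∧ v ⬝ᵥ (M *ᵥ v) = ⨅ i, hM.eigenvalues i := by
  obtain ⟨i, hi⟩ := exists_eq_ciInf_of_finite (f := hM.eigenvalues)
  have hv : ⇑(hM.eigenvectorBasis i) ⬝ᵥ ⇑(hM.eigenvectorBasis i) = 1 := by
    have := hM.eigenvectorBasis.inner_eq_one i
    rwa [EuclideanSpace.inner_eq_star_dotProduct, star_trivial] at this
  refine ⟨_, hv, ?_⟩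
  rw [hM.mulVec_eigenvectorBasis, dotProduct_smul, hv, smul_eq_mul, mul_one, hi]

theorem Matrix.isHermitian_transpose_mul_self {m n : Type*} [Fintype m] (A : Matrix m n ℝ) :
    (Aᵀ * A).IsHermitian :=
  isHermitian_conjTranspose_mul_self A

theorem Matrix.dotProduct_transpose_mul_self_mulVec {m n : Type*} [Fintype m] [Fintype n]
    (A : Matrix m n ℝ) (x : n → ℝ) : x ⬝ᵥ ((Aᵀ * A) *ᵥ x) = (A *ᵥ x) ⬝ᵥ (A *ᵥ x) := by
  rw [← mulVec_mulVec, dotProduct_mulVec, vecMul_transpose, dotProduct_comm]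

theorem Matrix.dotProduct_self_le_of_transpose_mul_mul_eq_transpose {m n : Type*} [Fintype m]
    [Fintype n] {A : Matrix m n ℝ} {P : Matrix n m ℝ} (hP : Aᵀ * A * P = Aᵀ) (y : m → ℝ) :
    (A *ᵥ (P *ᵥ y)) ⬝ᵥ (A *ᵥ (P *ᵥ y)) ≤ y ⬝ᵥ y := by
  have hnormal : Aᵀ *ᵥ (y - A *ᵥ (P *ᵥ y)) = 0 := by
    rw [mulVec_sub, mulVec_mulVec, mulVec_mulVec, hP, sub_self]
  have horth : (A *ᵥ (P *ᵥ y)) ⬝ᵥ (y - A *ᵥ (P *ᵥ y)) = 0 := by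
    rw [dotProduct_comm, dotProduct_mulVec, ← mulVec_transpose, hnormal, zero_dotProduct]
  set p := A *ᵥ (P *ᵥ y)
  have hpythag : y ⬝ᵥ y = p ⬝ᵥ p + (y - p) ⬝ᵥ (y - p) + 2 * (p ⬝ᵥ (y - p)) := by
    simp only [sub_dotProduct, dotProduct_sub, dotProduct_comm y p]
    ring
  rw [hpythag, horth, mul_zero, add_zero]
  exact le_add_of_nonneg_right (dotProduct_star_self_nonneg _)

theorem e2norm_eq_sqrt_dotProduct {n : ℕ} (v : Fin n → ℝ) : e2norm v = √(v ⬝ᵥ v) := by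
  simp [e2norm, dotProduct, sq]

theorem e2norm_eq_norm_toLp {n : ℕ} (v : Fin n → ℝ) :
    e2norm v = ‖(WithLp.toLp 2 v : EuclideanSpace ℝ (Fin n))‖ := by
  simp [e2norm, EuclideanSpace.norm_eq]

section L2OpNorm

open scoped Matrix.Norms.L2Operator

variable {a b : ℕ}

theorem opNorm2_eq_l2_opNorm (M : Matrix (Fin a) (Fin b) ℝ) : opNorm2 M = ‖M‖ := by
  rw [opNorm2, l2_opNorm_def, ← ContinuousLinearMap.sSup_unitClosedBall_eq_norm]
  congr 1
  ext y
  constructor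
  · rintro ⟨x, hx, rfl⟩
    exact ⟨WithLp.toLp 2 x, by simpa [← e2norm_eq_norm_toLp] using hx,
      by simp [e2norm_eq_norm_toLp]⟩
  · rintro ⟨x, hx, rfl⟩
    exact ⟨x.ofLp, by simpa [e2norm_eq_norm_toLp] using hx, by rw [e2norm_eq_norm_toLp]; rfl⟩

theorem opNorm2_nonneg (M : Matrix (Fin a) (Fin b) ℝ) : 0 ≤ opNorm2 M :=
  opNorm2_eq_l2_opNorm M ▸ norm_nonneg M

theorem e2norm_mulVec_le (M : Matrix (Fin a) (Fin b) ℝ) (x : Fin b → ℝ) :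
    e2norm (M *ᵥ x) ≤ opNorm2 M * e2norm x := by
  simpa [e2norm_eq_norm_toLp, opNorm2_eq_l2_opNorm] using M.l2_opNorm_mulVec (WithLp.toLp 2 x)

theorem opNorm2_le_of_e2norm_mulVec_le {M : Matrix (Fin a) (Fin b) ℝ} {C : ℝ} (hC : 0 ≤ C)
    (h : ∀ x, e2norm (M *ᵥ x) ≤ C * e2norm x) : opNorm2 M ≤ C := by
  rw [opNorm2_eq_l2_opNorm, l2_opNorm_def]
  refine ContinuousLinearMap.opNorm_le_bound _ hC fun x => ?_
  have := h x.ofLp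
  rwa [e2norm_eq_norm_toLp, e2norm_eq_norm_toLp, WithLp.toLp_ofLp] at this

end L2OpNorm

section SingularValue

variable {a b : ℕ}

theorem sigmaMin_eq (A : Matrix (Fin a) (Fin b) ℝ) :
    sigmaMin A = √(⨅ i, (isHermitian_transpose_mul_self A).eigenvalues i) :=
  rfl

theorem sigmaMin_mul_e2norm_le (A : Matrix (Fin a) (Fin b) ℝ) (x : Fin b → ℝ) :
    sigmaMin A * e2norm x ≤ e2norm (A *ᵥ x) := by
  have h := (isHermitian_transpose_mul_self A).iInf_eigenvalues_mul_dotProduct_le x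
  rw [dotProduct_transpose_mul_self_mulVec] at h
  rw [sigmaMin_eq, e2norm_eq_sqrt_dotProduct, e2norm_eq_sqrt_dotProduct,
    ← Real.sqrt_mul' _ (y := x ⬝ᵥ x) (dotProduct_star_self_nonneg x)]
  exact Real.sqrt_le_sqrt h

theorem exists_e2norm_eq_one_e2norm_mulVec_eq_sigmaMin [NeZero b] (A : Matrix (Fin a) (Fin b) ℝ) :
    ∃ v, e2norm v = 1 ∧ e2norm (A *ᵥ v) = sigmaMin A := by
  obtain ⟨v, hv, hAv⟩ :=
    (isHermitian_transpose_mul_self A).exists_dotProduct_mulVec_eq_iInf_eigenvalues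
  rw [dotProduct_transpose_mul_self_mulVec] at hAv
  exact ⟨v, by rw [e2norm_eq_sqrt_dotProduct, hv, Real.sqrt_one],
    by rw [e2norm_eq_sqrt_dotProduct, hAv, sigmaMin_eq]⟩

theorem sigmaMin_pos [NeZero b] {A : Matrix (Fin a) (Fin b) ℝ}
    (hA : Function.Injective A.mulVec) : 0 < sigmaMin A := by
  obtain ⟨i, hi⟩ := exists_eq_ciInf_of_finite (f := (isHermitian_transpose_mul_self A).eigenvalues)
  rw [sigmaMin_eq, ← hi]
  exact Real.sqrt_pos.mpr ((PosDef.conjTranspose_mul_self A hA).eigenvalues_pos i)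

theorem one_div_sigmaMin_le_opNorm2_of_mul_eq_one [NeZero b] {A : Matrix (Fin a) (Fin b) ℝ}
    {G : Matrix (Fin b) (Fin a) ℝ} (hG : G * A = 1) : 1 / sigmaMin A ≤ opNorm2 G := by
  obtain ⟨v, hv, hAv⟩ := exists_e2norm_eq_one_e2norm_mulVec_eq_sigmaMin A
  refine div_le_of_le_mul₀ (Real.sqrt_nonneg _) (opNorm2_nonneg G) ?_
  calc 1 = e2norm (G *ᵥ (A *ᵥ v)) := by rw [mulVec_mulVec, hG, one_mulVec, hv]
    _ ≤ opNorm2 G * sigmaMin A := hAv ▸ e2norm_mulVec_le G _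

theorem opNorm2_le_one_div_sigmaMin_of_transpose_mul_mul_eq_transpose
    {A : Matrix (Fin a) (Fin b) ℝ} {P : Matrix (Fin b) (Fin a) ℝ} (hσ : 0 < sigmaMin A)
    (hP : Aᵀ * A * P = Aᵀ) : opNorm2 P ≤ 1 / sigmaMin A := by
  refine opNorm2_le_of_e2norm_mulVec_le (by positivity) fun y => ?_
  rw [one_div_mul_eq_div, le_div_iff₀' hσ]
  calc sigmaMin A * e2norm (P *ᵥ y) ≤ e2norm (A *ᵥ (P *ᵥ y)) := sigmaMin_mul_e2norm_le A _
    _ ≤ e2norm y := by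
      rw [e2norm_eq_sqrt_dotProduct, e2norm_eq_sqrt_dotProduct]
      exact Real.sqrt_le_sqrt (dotProduct_self_le_of_transpose_mul_mul_eq_transpose hP y)

end SingularValue

theorem sobolev_dual_minimizes_general (m k r : ℕ) (hk : 0 < k)
    (E : Matrix (Fin m) (Fin k) ℝ) (hE : E.rank = k) :
    let A := (Dmat m)⁻¹ ^ r * E
    let Fsob := (Aᴴ * A)⁻¹ * Aᴴ * (Dmat m)⁻¹ ^ r
    Fsob * E = 1 ∧
    (∀ F : Matrix (Fin k) (Fin m) ℝ, F * E = 1 →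
      opNorm2 (Fsob * (Dmat m) ^ r) ≤ opNorm2 (F * (Dmat m) ^ r)) ∧
    opNorm2 (Fsob * (Dmat m) ^ r) = 1 / sigmaMin A := by
  intro A Fsob
  have : NeZero k := ⟨hk.ne'⟩
  have hDr : IsUnit (Dmat m ^ r).det := by simp [det_pow, Dmat_det]
  have hA : Function.Injective A.mulVec := mulVec_injective_of_rank_eq_card <| by
    rw [rank_mul_eq_right_of_isUnit_det _ _ (by simpa using hDr.inv), hE, Fintype.card_fin]
  have hAA : IsUnit (Aᴴ * A).det :=
    (isUnit_iff_isUnit_det _).mp (PosDef.conjTranspose_mul_self A hA).isUnit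
  have hPA : (Aᴴ * A)⁻¹ * Aᴴ * A = 1 := by rw [Matrix.mul_assoc, nonsing_inv_mul _ hAA]
  have hFsob : Fsob * Dmat m ^ r = (Aᴴ * A)⁻¹ * Aᴴ := by
    simp only [Fsob, Matrix.mul_assoc, inv_pow', nonsing_inv_mul _ hDr, Matrix.mul_one]
  have hupper : opNorm2 ((Aᴴ * A)⁻¹ * Aᴴ) ≤ 1 / sigmaMin A :=
    opNorm2_le_one_div_sigmaMin_of_transpose_mul_mul_eq_transpose (sigmaMin_pos hA) <| by
      rw [← conjTranspose_eq_transpose_of_trivial, ← Matrix.mul_assoc, mul_nonsing_inv _ hAA,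
        Matrix.one_mul]
  refine ⟨by rw [Matrix.mul_assoc]; exact hPA, fun F hF => ?_, ?_⟩
  · rw [hFsob]
    refine hupper.trans (one_div_sigmaMin_le_opNorm2_of_mul_eq_one ?_)
    simp only [A, Matrix.mul_assoc, ← Matrix.mul_assoc (Dmat m ^ r), inv_pow',
      mul_nonsing_inv _ hDr, Matrix.one_mul, hF]
  · rw [hFsob]
    exact hupper.antisymm (one_div_sigmaMin_le_opNorm2_of_mul_eq_one hPA)

/-- The Sobolev dual `F_{sob,r} = (D^{−r}E)† D^{−r}` is a left inverse of `E`, minimizes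
`‖F D^r‖_{ℓ₂→ℓ₂}` among all left inverses `F` of `E`, and the minimum value is
`1/σ_min(D^{−r}E)`. -/
theorem sobolev_dual_minimizes (m k r : ℕ) (hk : 0 < k) (hkm : k ≤ m) (hr : 0 < r)
    (E : Matrix (Fin m) (Fin k) ℝ) (hE : E.rank = k) :
    let A := (Dmat m)⁻¹ ^ r * E
    let Fsob := (Aᴴ * A)⁻¹ * Aᴴ * (Dmat m)⁻¹ ^ r
    Fsob * E = 1 ∧
    (∀ F : Matrix (Fin k) (Fin m) ℝ, F * E = 1 →
      opNorm2 (Fsob * (Dmat m) ^ r) ≤ opNorm2 (F * (Dmat m) ^ r)) ∧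
    opNorm2 (Fsob * (Dmat m) ^ r) = 1 / sigmaMin A :=
  sobolev_dual_minimizes_general m k r hk E hE
end
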